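/- arXiv:2605.10206 — 5 statements merged into one kernel-verified Lean document; each statement's English description precedes it below -/
import Mathlib

section
/- Let (Ω, 𝓕, ℙ) be a standard Borel probability space, 𝒳 and 𝒴 standard Borel spaces, A a positive integer. Let X : Ω → 𝒳, T : Ω → Fin A, potential outcomes Y(a) : Ω → 𝒴 for each a ∈ Fin A, and a completed vector Ȳ : Ω → 𝒴^A, all measurable. Assume: (exact factual reconstruction) Ȳ(ω)(T(ω)) = Y(T(ω))(ω) ℙ-almost surely; (ignorability) for every a, Y(a) and T are conditionally independent given σ(X); (invariance) T and Ȳ are conditionally independent given σ(X). Then for every a ∈ Fin A, the regular conditional distribution of ω ↦ Ȳ(ω)(a) given X equals the regular conditional distribution of Y(a) given X, for (ℙ∘X⁻¹)-almost every x such that the conditional probability ℙ(T = a | X = x) is strictly positive. -/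
open MeasureTheory ProbabilityTheory

/-!
On the event `{T ∈ E}`, conditional independence of `T` and `Z` given `X` factors the joint law
of `(X, Z)` as the propensity-weighted law of `X` composed with the conditional distribution of
`Z` given `X`. Exact factual reconstruction makes the restricted joint laws of `(X, Ȳ a)` and
`(X, Y a)` on `{T = a}` coincide, so by uniqueness of disintegrations the two conditional
distributions agree wherever the propensity is positive.
-/

namespace ProbabilityTheory

variable {Ω α β γ : Type*} {mΩ : MeasurableSpace Ω} {mα : MeasurableSpace α}
  {mβ : MeasurableSpace β} {mγ : MeasurableSpace γ} [StandardBorelSpace Ω]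
  [StandardBorelSpace β] [Nonempty β] [StandardBorelSpace γ] [Nonempty γ]
  {μ : Measure Ω} [IsFiniteMeasure μ] {X : Ω → α} {T : Ω → β}

lemma map_restrict_preimage_eq_withDensity_compProd {Z : Ω → γ} (hX : Measurable X)
    (hT : Measurable T) (hZ : Measurable Z) (h : T ⟂ᵢ[X, hX; μ] Z) {E : Set β}
    (hE : MeasurableSet E) :
    (μ.restrict (T ⁻¹' E)).map (fun ω ↦ (X ω, Z ω))
      = (μ.map X).withDensity (fun x ↦ condDistrib T X μ x E) ⊗ₘ condDistrib Z X μ := by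
  have hjoint := (condIndepFun_iff_map_prod_eq_prod_condDistrib_prod_condDistrib hT hZ hX).mp h
  refine Measure.ext_prod fun {B s} hB hs ↦ ?_
  calc ((μ.restrict (T ⁻¹' E)).map (fun ω ↦ (X ω, Z ω))) (B ×ˢ s)
      = μ.map (fun ω ↦ (X ω, T ω, Z ω)) (B ×ˢ E ×ˢ s) := by
        rw [Measure.map_apply (by fun_prop) (hB.prod hs),
          Measure.restrict_apply (hB.prod hs |>.preimage (by fun_prop)),
          Measure.map_apply (by fun_prop) (hB.prod (hE.prod hs))]
        congr 1
        ext ω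
        simp only [Set.mem_inter_iff, Set.mem_preimage, Set.mem_prod]
        tauto
    _ = ∫⁻ x in B, condDistrib T X μ x E * condDistrib Z X μ x s ∂μ.map X := by
        rw [hjoint, ← Measure.compProd_eq_comp_prod,
          Measure.compProd_apply_prod hB (hE.prod hs)]
        simp only [Kernel.prod_apply_prod]
    _ = _ := by
        rw [Measure.compProd_apply_prod hB hs, setLIntegral_withDensity_eq_setLIntegral_mul _
          (Kernel.measurable_coe _ hE) (Kernel.measurable_coe _ hs) hB]
        rfl

theorem condDistrib_ae_eq_of_condIndepFun_of_ae_eq_on_preimage {Z W : Ω → γ}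
    (hX : Measurable X) (hT : Measurable T) (hZ : Measurable Z) (hW : Measurable W)
    (hTZ : T ⟂ᵢ[X, hX; μ] Z) (hTW : T ⟂ᵢ[X, hX; μ] W) {E : Set β} (hE : MeasurableSet E)
    (hZW : ∀ᵐ ω ∂μ, T ω ∈ E → Z ω = W ω) :
    ∀ᵐ x ∂μ.map X,
      condDistrib T X μ x E ≠ 0 → condDistrib Z X μ x = condDistrib W X μ x := by
  have hπ : Measurable fun x ↦ condDistrib T X μ x E := Kernel.measurable_coe _ hE
  have : IsFiniteMeasure ((μ.map X).withDensity fun x ↦ condDistrib T X μ x E) :=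
    isFiniteMeasure_withDensity <| ne_top_of_le_ne_top (measure_ne_top (μ.map X) Set.univ)
      ((lintegral_mono fun _ ↦ prob_le_one).trans_eq lintegral_one)
  have hlaw : (μ.restrict (T ⁻¹' E)).map (fun ω ↦ (X ω, Z ω))
      = (μ.restrict (T ⁻¹' E)).map (fun ω ↦ (X ω, W ω)) := by
    refine Measure.map_congr ?_
    filter_upwards [ae_restrict_mem (hT hE), ae_restrict_of_ae hZW] with ω hωE hω
    rw [hω hωE]
  rw [map_restrict_preimage_eq_withDensity_compProd hX hT hZ hTZ hE,
    map_restrict_preimage_eq_withDensity_compProd hX hT hW hTW hE] at hlaw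
  exact (ae_withDensity_iff hπ).mp (Kernel.ae_eq_of_compProd_eq hlaw)

end ProbabilityTheory

theorem stmt2_general {Ω 𝓧 𝓨 : Type*}
    [MeasurableSpace Ω] [StandardBorelSpace Ω]
    [MeasurableSpace 𝓧]
    [MeasurableSpace 𝓨] [StandardBorelSpace 𝓨] [Nonempty 𝓨]
    (Pr : Measure Ω) [IsProbabilityMeasure Pr]
    (A : ℕ) [NeZero A]
    (X : Ω → 𝓧) (T : Ω → Fin A) (Y : Fin A → Ω → 𝓨) (Ybar : Ω → Fin A → 𝓨)
    (hX : Measurable X) (hT : Measurable T)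
    (hY : ∀ a, Measurable (Y a)) (hYbar : Measurable Ybar)
    -- exact factual reconstruction
    (hrecon : ∀ᵐ ω ∂Pr, Ybar ω (T ω) = Y (T ω) ω)
    -- ignorability: Y(a) ⟂⟂ T given σ(X)
    (hignor : ∀ a : Fin A,
      CondIndepFun (MeasurableSpace.comap X inferInstance) hX.comap_le (Y a) T Pr)
    -- invariance: T ⟂⟂ Ȳ given σ(X)
    (hinv : CondIndepFun (MeasurableSpace.comap X inferInstance) hX.comap_le T Ybar Pr) :
    ∀ a : Fin A, ∀ᵐ x ∂(Pr.map X),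
      0 < condDistrib T X Pr x {a} →
        condDistrib (fun ω => Ybar ω a) X Pr x = condDistrib (Y a) X Pr x := by
  intro a
  have hTY : T ⟂ᵢ[X, hX; Pr] Y a := (hignor a).symm
  have hTYbar : T ⟂ᵢ[X, hX; Pr] fun ω ↦ Ybar ω a :=
    hinv.comp measurable_id (measurable_pi_apply a)
  have hfactual : ∀ᵐ ω ∂Pr, T ω ∈ ({a} : Set (Fin A)) → Ybar ω a = Y a ω := by
    filter_upwards [hrecon] with ω hω hTa
    rwa [Set.mem_singleton_iff.mp hTa] at hω
  filter_upwards [condDistrib_ae_eq_of_condIndepFun_of_ae_eq_on_preimage hX hT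
    (measurable_pi_apply a |>.comp hYbar) (hY a) hTYbar hTY (measurableSet_singleton a)
    hfactual] with x hx hpos
  exact hx hpos.ne'

theorem stmt2 {Ω 𝓧 𝓨 : Type*}
    [MeasurableSpace Ω] [StandardBorelSpace Ω] [Nonempty Ω]
    [MeasurableSpace 𝓧] [StandardBorelSpace 𝓧]
    [MeasurableSpace 𝓨] [StandardBorelSpace 𝓨] [Nonempty 𝓨]
    (Pr : Measure Ω) [IsProbabilityMeasure Pr]
    (A : ℕ) [NeZero A]
    (X : Ω → 𝓧) (T : Ω → Fin A) (Y : Fin A → Ω → 𝓨) (Ybar : Ω → Fin A → 𝓨)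
    (hX : Measurable X) (hT : Measurable T)
    (hY : ∀ a, Measurable (Y a)) (hYbar : Measurable Ybar)
    -- exact factual reconstruction
    (hrecon : ∀ᵐ ω ∂Pr, Ybar ω (T ω) = Y (T ω) ω)
    -- ignorability: Y(a) ⟂⟂ T given σ(X)
    (hignor : ∀ a : Fin A,
      CondIndepFun (MeasurableSpace.comap X inferInstance) hX.comap_le (Y a) T Pr)
    -- invariance: T ⟂⟂ Ȳ given σ(X)
    (hinv : CondIndepFun (MeasurableSpace.comap X inferInstance) hX.comap_le T Ybar Pr) :
    ∀ a : Fin A, ∀ᵐ x ∂(Pr.map X),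
      0 < condDistrib T X Pr x {a} →
        condDistrib (fun ω => Ybar ω a) X Pr x = condDistrib (Y a) X Pr x :=
  stmt2_general Pr A X T Y Ybar hX hT hY hYbar hrecon hignor hinv
end

section
/- Let a ∈ (0, 1/2] and q ≥ 0. There exists a constant C = C(a,q) < ∞ such that for every n ∈ ℕ and p ∈ [0,1], if N is a binomial random variable with parameters n and p, then E[ (log(max(N,2)))^q · (max(N,1))^{−a} ] ≤ C · (log(max(n,2)))^q · (max(n·p, 1))^{−a}. -/
/-!
After bounding `log (max N 2)` by `log (max n 2)`, it remains to bound `E[max(N,1)^(-a)]`.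
Since `1 / max(k,1) ≤ 2 / (k+1)` and `x ↦ x ^ a` is concave for `a ≤ 1`, Jensen's inequality gives
`E[max(N,1)^(-a)] ≤ (2 E[1/(N+1)])^a`. The identity
`(n+1) p · C(n,k) p^k (1-p)^(n-k) / (k+1) = C(n+1,k+1) p^(k+1) (1-p)^(n-k)` shows that
`(n+1) p E[1/(N+1)]` is a `Binomial(n+1,p)` probability, hence at most `1`; so `C = 2^a` works.
-/

open MeasureTheory Finset

theorem integral_comp_eq_sum_range {Ω : Type*} [MeasurableSpace Ω] {μ : Measure Ω}
    [IsFiniteMeasure μ] {N : Ω → ℕ} (hN : Measurable N) {n : ℕ}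
    (hNn : ∀ k, n < k → μ {ω | N ω = k} = 0) (g : ℕ → ℝ) :
    ∫ ω, g (N ω) ∂μ = ∑ k ∈ range (n + 1), μ.real {ω | N ω = k} * g k := by
  have hlaw : ∀ k, μ.map N {k} = μ {ω | N ω = k} := fun k =>
    Measure.map_apply hN (measurableSet_singleton k)
  have hsupp : ∀ᵐ k ∂μ.map N, k ∈ (range (n + 1) : Set ℕ) := by
    refine ae_iff_of_countable.2 fun k hk => ?_
    rw [hlaw] at hk
    simpa [Nat.lt_succ_iff] using not_lt.1 (mt (hNn k) hk)
  have hint : IntegrableOn g (range (n + 1) : Set ℕ) (μ.map N) := by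
    rw [← Set.biUnion_of_singleton (range (n + 1) : Set ℕ),
      integrableOn_finite_biUnion (range (n + 1)).finite_toSet]
    exact fun k _ => integrableOn_singleton
  rw [← integral_map hN.aemeasurable measurable_from_nat.aestronglyMeasurable,
    integral_eq_setIntegral hsupp, setIntegral_finset _ hint]
  simp only [measureReal_def, hlaw, smul_eq_mul]

noncomputable def binomialWeight (n : ℕ) (p : ℝ) (k : ℕ) : ℝ :=
  n.choose k * p ^ k * (1 - p) ^ (n - k)

namespace binomialWeight

variable {n k : ℕ} {p : ℝ}

lemma nonneg (hp : p ∈ Set.Icc (0 : ℝ) 1) : 0 ≤ binomialWeight n p k := by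
  have hp₀ : 0 ≤ p := hp.1
  have hp₁ : 0 ≤ 1 - p := sub_nonneg.2 hp.2
  unfold binomialWeight
  positivity

lemma sum_range (n : ℕ) (p : ℝ) : ∑ k ∈ range (n + 1), binomialWeight n p k = 1 := by
  have h := add_pow p (1 - p) n
  rw [add_sub_cancel, one_pow] at h
  rw [h]
  exact sum_congr rfl fun k _ => by unfold binomialWeight; ring

lemma eq_zero_of_lt (h : n < k) : binomialWeight n p k = 0 := by
  simp [binomialWeight, Nat.choose_eq_zero_of_lt h]

lemma succ_succ :
    binomialWeight (n + 1) p (k + 1) = (n + 1) * p / (k + 1) * binomialWeight n p k := by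
  have hc : ((n : ℝ) + 1) * n.choose k = (n + 1).choose (k + 1) * (k + 1) := by
    exact_mod_cast Nat.add_one_mul_choose_eq n k
  unfold binomialWeight
  rw [Nat.add_sub_add_right]
  field_simp
  linear_combination (-(p ^ (k + 1) * (1 - p) ^ (n - k))) * hc

lemma sum_div_succ_le (hp : p ∈ Set.Icc (0 : ℝ) 1) :
    ∑ k ∈ range (n + 1), binomialWeight n p k / (k + 1) ≤ (max (n * p) 1)⁻¹ := by
  have hle_one : ∑ k ∈ range (n + 1), binomialWeight n p k / (k + 1) ≤ 1 := by
    calc _ ≤ ∑ k ∈ range (n + 1), binomialWeight n p k :=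
          sum_le_sum fun k _ => div_le_self (nonneg hp) (by linarith [k.cast_nonneg (α := ℝ)])
      _ = 1 := sum_range n p
  have hle_inv : (n + 1) * p * ∑ k ∈ range (n + 1), binomialWeight n p k / (k + 1) ≤ 1 := by
    calc _ = ∑ k ∈ range (n + 1), binomialWeight (n + 1) p (k + 1) := by
          rw [mul_sum]; exact sum_congr rfl fun k _ => by rw [succ_succ]; ring
      _ ≤ ∑ k ∈ range (n + 2), binomialWeight (n + 1) p k := by
          rw [sum_range_succ' _ (n + 1)]; exact le_add_of_nonneg_right (nonneg hp)
      _ = 1 := sum_range (n + 1) p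
  rcases le_total (n * p : ℝ) 1 with hnp | hnp
  · rwa [max_eq_right hnp, inv_one]
  · have hS : 0 ≤ ∑ k ∈ range (n + 1), binomialWeight n p k / (k + 1) :=
      sum_nonneg fun k _ => div_nonneg (nonneg hp) (by positivity)
    rw [max_eq_left hnp, ← one_div, le_div_iff₀ (by linarith)]
    nlinarith

lemma sum_mul_max_one_rpow_neg_le {a : ℝ} (ha₀ : 0 ≤ a) (ha₁ : a ≤ 1)
    (hp : p ∈ Set.Icc (0 : ℝ) 1) :
    ∑ k ∈ range (n + 1), binomialWeight n p k * ((max k 1 : ℕ) : ℝ) ^ (-a)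
      ≤ 2 ^ a * (max (n * p) 1) ^ (-a) := by
  have hpt : ∀ k : ℕ, ((max k 1 : ℕ) : ℝ) ^ (-a) ≤ (2 / (k + 1)) ^ a := fun k => by
    have hk : (k : ℝ) + 1 ≤ 2 * (max k 1 : ℕ) := by
      exact_mod_cast (by omega : k + 1 ≤ 2 * max k 1)
    rw [Real.rpow_neg (by positivity), ← Real.inv_rpow (by positivity)]
    refine Real.rpow_le_rpow (by positivity) ?_ ha₀
    rw [inv_eq_one_div, div_le_div_iff₀ (by positivity) (by positivity)]
    linarith
  have hjensen := (Real.concaveOn_rpow ha₀ ha₁).le_map_sum (t := range (n + 1))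
    (fun k _ => nonneg hp) (sum_range n p) (p := fun k : ℕ => 2 / ((k : ℝ) + 1))
    (fun k _ => Set.mem_Ici.2 (by positivity))
  simp only [smul_eq_mul] at hjensen
  have hmean :
      ∑ k ∈ range (n + 1), binomialWeight n p k * (2 / (k + 1)) ≤ 2 * (max (n * p) 1)⁻¹ := by
    calc _ = 2 * ∑ k ∈ range (n + 1), binomialWeight n p k / (k + 1) := by
          rw [mul_sum]; exact sum_congr rfl fun k _ => by ring
      _ ≤ 2 * (max (n * p) 1)⁻¹ := by gcongr; exact sum_div_succ_le hp
  calc _ ≤ ∑ k ∈ range (n + 1), binomialWeight n p k * (2 / (k + 1)) ^ a :=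
        sum_le_sum fun k _ => mul_le_mul_of_nonneg_left (hpt k) (nonneg hp)
    _ ≤ (∑ k ∈ range (n + 1), binomialWeight n p k * (2 / (k + 1))) ^ a := hjensen
    _ ≤ (2 * (max (n * p) 1)⁻¹) ^ a :=
        Real.rpow_le_rpow (sum_nonneg fun k _ => mul_nonneg (nonneg hp) (by positivity)) hmean ha₀
    _ = 2 ^ a * (max (n * p) 1) ^ (-a) := by
        rw [Real.mul_rpow (by norm_num) (by positivity), Real.inv_rpow (by positivity),
          Real.rpow_neg (by positivity)]

end binomialWeight

theorem stmt8 (a q : ℝ) (ha : 0 < a) (ha' : a ≤ 1 / 2) (hq : 0 ≤ q) :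
    ∃ C : ℝ, ∀ (n : ℕ) (p : ℝ), p ∈ Set.Icc (0 : ℝ) 1 →
      ∀ (Ω : Type) (_ : MeasurableSpace Ω) (μ : Measure Ω), IsProbabilityMeasure μ →
      ∀ N : Ω → ℕ, Measurable N →
      (∀ k : ℕ, μ {ω | N ω = k}
          = ENNReal.ofReal ((n.choose k : ℝ) * p ^ k * (1 - p) ^ (n - k))) →
      ∫ ω, (Real.log ((max (N ω) 2 : ℕ) : ℝ)) ^ q * ((max (N ω) 1 : ℕ) : ℝ) ^ (-a) ∂μ
        ≤ C * (Real.log ((max n 2 : ℕ) : ℝ)) ^ q * (max ((n : ℝ) * p) 1) ^ (-a) := by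
  refine ⟨2 ^ a, fun n p hp Ω _ μ _ N hN hlaw => ?_⟩
  set L := Real.log ((max n 2 : ℕ) : ℝ)
  have hlog : ∀ k ≤ n, Real.log ((max k 2 : ℕ) : ℝ) ^ q ≤ L ^ q := fun k hk => by
    have h2 : (2 : ℝ) ≤ (max k 2 : ℕ) := by exact_mod_cast le_max_right k 2
    refine Real.rpow_le_rpow (Real.log_nonneg (by linarith)) (Real.log_le_log (by linarith) ?_) hq
    exact_mod_cast max_le_max_right 2 hk
  have hweight : ∀ k, μ.real {ω | N ω = k} = binomialWeight n p k := fun k => by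
    rw [measureReal_def, hlaw]
    exact ENNReal.toReal_ofReal (binomialWeight.nonneg hp)
  have hsupp : ∀ k, n < k → μ {ω | N ω = k} = 0 := fun k hk => by
    rw [← measureReal_eq_zero_iff, hweight, binomialWeight.eq_zero_of_lt hk]
  rw [integral_comp_eq_sum_range hN hsupp
    (fun k => Real.log ((max k 2 : ℕ) : ℝ) ^ q * ((max k 1 : ℕ) : ℝ) ^ (-a))]
  calc _ ≤ ∑ k ∈ range (n + 1),
          binomialWeight n p k * (L ^ q * ((max k 1 : ℕ) : ℝ) ^ (-a)) := by
        refine sum_le_sum fun k hk => ?_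
        rw [hweight]
        have hk : k ≤ n := Nat.lt_succ_iff.1 (mem_range.1 hk)
        exact mul_le_mul_of_nonneg_left (mul_le_mul_of_nonneg_right (hlog k hk) (by positivity))
          (binomialWeight.nonneg hp)
    _ = L ^ q * ∑ k ∈ range (n + 1), binomialWeight n p k * ((max k 1 : ℕ) : ℝ) ^ (-a) := by
        rw [mul_sum]; exact sum_congr rfl fun k _ => by ring
    _ ≤ L ^ q * (2 ^ a * (max (n * p) 1) ^ (-a)) := by
        gcongr
        exact binomialWeight.sum_mul_max_one_rpow_neg_le ha.le (by linarith) hp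
    _ = 2 ^ a * L ^ q * (max ((n : ℝ) * p) 1) ^ (-a) := by ring
end

section
/- Let M be a positive integer, 𝒴 ⊆ ℝ^p compact, q₁,…,q_M ≥ 0 with Σ_j q_j = 1, and let μ_j, ν_j (j = 1,…,M) be Borel probability measures on 𝒴. Define P = Σ_{j=1}^M q_j · (δ_j ⊗ μ_j) and R = Σ_{j=1}^M q_j · (δ_j ⊗ ν_j) as probability measures on {1,…,M} × 𝒴 (so both have 𝒲-marginal Q = Σ_j q_j δ_j). Then eW₁(P,R) = Σ_{j=1}^M q_j · W₁(μ_j, ν_j). -/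
open MeasureTheory ProbabilityTheory
open scoped ENNReal NNReal

noncomputable def W1 {Y : Type*} [MeasurableSpace Y] [PseudoMetricSpace Y]
    (η ζ : Measure Y) : ℝ :=
  sInf ((fun γ : Measure (Y × Y) => ∫ q, dist q.1 q.2 ∂γ) ''
    {γ | γ.map Prod.fst = η ∧ γ.map Prod.snd = ζ})

noncomputable def eW1 {W Y : Type*} [MeasurableSpace W] [MeasurableSpace Y]
    [PseudoMetricSpace Y] (P R : Measure (W × Y)) : ℝ :=
  sInf ((fun α : Measure ((W × Y) × (W × Y)) => ∫ q, dist q.1.2 q.2.2 ∂α) ''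
    {α | α.map Prod.fst = P ∧ α.map Prod.snd = R ∧
      α.map (fun q => (q.1.1, q.2.1)) = (P.map Prod.fst).map (fun w => (w, w))})

/-! A diagonal coupling `α` never moves mass between states, so it splits into its restrictions
to the fibres `{w = j}`; the `j`-th piece, pushed to `𝒴 × 𝒴`, has marginals `q j • μ j` and
`q j • ν j`, hence costs at least `q j * W₁(μ j, ν j)`. Conversely, near-optimal couplings of each
pair `(μ j, ν j)`, placed over the diagonal point `(j, j)` and mixed with weights `q j`, form a
diagonal coupling of cost at most `∑ q j * W₁(μ j, ν j) + ε`. Compactness of `𝒴` keeps every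
transport cost integrable, so no Bochner integral takes its junk value. -/

open Set

def IsDiagonalCoupling {W Y : Type*} [MeasurableSpace W] [MeasurableSpace Y]
    (α : Measure ((W × Y) × (W × Y))) (P R : Measure (W × Y)) : Prop :=
  α.map Prod.fst = P ∧ α.map Prod.snd = R ∧
    α.map (fun x => (x.1.1, x.2.1)) = (P.map Prod.fst).map fun w => (w, w)

section Coupling

variable {Y : Type*} [PseudoMetricSpace Y] [MeasurableSpace Y]

lemma W1_le_integral {η ζ : Measure Y} {γ : Measure (Y × Y)}
    (hfst : γ.map Prod.fst = η) (hsnd : γ.map Prod.snd = ζ) :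
    W1 η ζ ≤ ∫ y, dist y.1 y.2 ∂γ :=
  csInf_le ⟨0, by rintro _ ⟨γ, -, rfl⟩; exact integral_nonneg fun _ => dist_nonneg⟩
    ⟨γ, ⟨hfst, hsnd⟩, rfl⟩

lemma mul_W1_le_integral {η ζ : Measure Y} {γ : Measure (Y × Y)} {c : ℝ≥0}
    (hfst : γ.map Prod.fst = (c : ℝ≥0∞) • η) (hsnd : γ.map Prod.snd = (c : ℝ≥0∞) • ζ) :
    c * W1 η ζ ≤ ∫ y, dist y.1 y.2 ∂γ := by
  rcases eq_or_ne c 0 with rfl | hc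
  · simpa using integral_nonneg fun y : Y × Y => dist_nonneg
  have hc' : (c : ℝ≥0∞) ≠ 0 := by exact_mod_cast hc
  have unscale : ∀ m : Measure Y, (c : ℝ≥0∞)⁻¹ • (c : ℝ≥0∞) • m = m := fun m => by
    rw [smul_smul, ENNReal.inv_mul_cancel hc' ENNReal.coe_ne_top, one_smul]
  have hW1 := W1_le_integral (γ := (c : ℝ≥0∞)⁻¹ • γ)
    (by rw [Measure.map_smul, hfst, unscale]) (by rw [Measure.map_smul, hsnd, unscale])
  rw [integral_smul_measure, ← ENNReal.coe_inv hc, ENNReal.coe_toReal, smul_eq_mul,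
    NNReal.coe_inv] at hW1
  exact (le_inv_mul_iff₀ (NNReal.coe_pos.mpr (pos_iff_ne_zero.mpr hc))).mp hW1

lemma exists_coupling_integral_lt_W1_add (η ζ : Measure Y) [IsProbabilityMeasure η]
    [IsProbabilityMeasure ζ] {ε : ℝ} (hε : 0 < ε) :
    ∃ γ : Measure (Y × Y), IsProbabilityMeasure γ ∧ γ.map Prod.fst = η ∧
      γ.map Prod.snd = ζ ∧ ∫ y, dist y.1 y.2 ∂γ < W1 η ζ + ε := by
  have hne : ((fun γ : Measure (Y × Y) => ∫ y, dist y.1 y.2 ∂γ) ''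
      {γ | γ.map Prod.fst = η ∧ γ.map Prod.snd = ζ}).Nonempty :=
    ⟨_, η.prod ζ, ⟨by simp [Measure.map_fst_prod], by simp [Measure.map_snd_prod]⟩, rfl⟩
  obtain ⟨_, ⟨γ, ⟨hfst, hsnd⟩, rfl⟩, hlt⟩ := exists_lt_of_csInf_lt hne (lt_add_of_pos_right _ hε)
  refine ⟨γ, ?_, hfst, hsnd, hlt⟩
  rw [← Measure.isProbabilityMeasure_map_iff measurable_fst.aemeasurable, hfst]
  infer_instance

lemma eW1_le_integral {W : Type*} [MeasurableSpace W] {P R : Measure (W × Y)}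
    {α : Measure ((W × Y) × (W × Y))} (hα : IsDiagonalCoupling α P R) :
    eW1 P R ≤ ∫ x, dist x.1.2 x.2.2 ∂α :=
  csInf_le ⟨0, by rintro _ ⟨α, -, rfl⟩; exact integral_nonneg fun _ => dist_nonneg⟩ ⟨α, hα, rfl⟩

lemma integrable_dist_of_boundedSpace [OpensMeasurableSpace Y] [SecondCountableTopology Y]
    [BoundedSpace Y] {X : Type*} [MeasurableSpace X] {μ : Measure X} [IsFiniteMeasure μ]
    {f g : X → Y} (hf : Measurable f) (hg : Measurable g) :
    Integrable (fun x => dist (f x) (g x)) μ :=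
  .of_bound (hf.dist hg).aestronglyMeasurable (Metric.diam (univ : Set Y)) <| ae_of_all _ fun x => by
    rw [Real.norm_of_nonneg dist_nonneg]
    exact Metric.dist_le_diam_of_mem (Bornology.IsBounded.all _) trivial trivial

end Coupling

section StateMixture

variable {W Y : Type*} [Fintype W] [MeasurableSpace W] [MeasurableSpace Y]

noncomputable def stateMixture (q : W → ℝ≥0) (m : W → Measure Y) : Measure (W × Y) :=
  ∑ j, (q j : ℝ≥0∞) • (Measure.dirac j).prod (m j)

lemma map_fst_stateMixture (q : W → ℝ≥0) (m : W → Measure Y)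
    [∀ j, IsProbabilityMeasure (m j)] :
    (stateMixture q m).map Prod.fst = ∑ j, (q j : ℝ≥0∞) • Measure.dirac j := by
  simp [stateMixture, Measure.map_finset_sum measurable_fst.aemeasurable, Measure.map_smul,
    Measure.map_fst_prod]

lemma map_snd_restrict_stateMixture [MeasurableSingletonClass W] (q : W → ℝ≥0)
    (m : W → Measure Y) [∀ j, SFinite (m j)] (j : W) :
    ((stateMixture q m).restrict (Prod.fst ⁻¹' {j})).map Prod.snd = (q j : ℝ≥0∞) • m j := by
  classical
  ext S hS
  have hfiber : Prod.snd ⁻¹' S ∩ Prod.fst ⁻¹' {j} = ({j} : Set W) ×ˢ S := by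
    ext x; simp [and_comm]
  rw [Measure.map_apply measurable_snd hS, Measure.restrict_apply (measurable_snd hS), hfiber]
  simp [stateMixture, Measure.prod_prod, Set.indicator_apply]

instance (q : W → ℝ≥0) (m : W → Measure Y) [∀ j, IsFiniteMeasure (m j)] :
    IsFiniteMeasure (stateMixture q m) :=
  ⟨by simp [stateMixture, ENNReal.sum_lt_top, ENNReal.mul_lt_top]⟩

noncomputable def fiberwiseCoupling (q : W → ℝ≥0) (γ : W → Measure (Y × Y)) :
    Measure ((W × Y) × (W × Y)) :=
  ∑ j, (q j : ℝ≥0∞) • (γ j).map fun y => ((j, y.1), (j, y.2))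

variable (q : W → ℝ≥0) (γ : W → Measure (Y × Y))

lemma map_fst_fiberwiseCoupling [∀ j, IsFiniteMeasure (γ j)] :
    (fiberwiseCoupling q γ).map Prod.fst = stateMixture q fun j => (γ j).map Prod.fst := by
  rw [fiberwiseCoupling, stateMixture, Measure.map_finset_sum (by fun_prop)]
  refine Finset.sum_congr rfl fun j _ => ?_
  rw [Measure.map_smul, Measure.map_map (by fun_prop) (by fun_prop), Measure.dirac_prod,
    Measure.map_map (by fun_prop) (by fun_prop)]
  rfl

lemma map_snd_fiberwiseCoupling [∀ j, IsFiniteMeasure (γ j)] :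
    (fiberwiseCoupling q γ).map Prod.snd = stateMixture q fun j => (γ j).map Prod.snd := by
  rw [fiberwiseCoupling, stateMixture, Measure.map_finset_sum (by fun_prop)]
  refine Finset.sum_congr rfl fun j _ => ?_
  rw [Measure.map_smul, Measure.map_map (by fun_prop) (by fun_prop), Measure.dirac_prod,
    Measure.map_map (by fun_prop) (by fun_prop)]
  rfl

lemma map_states_fiberwiseCoupling [∀ j, IsProbabilityMeasure (γ j)] :
    (fiberwiseCoupling q γ).map (fun x => (x.1.1, x.2.1))
      = (∑ j, (q j : ℝ≥0∞) • Measure.dirac j).map fun w => (w, w) := by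
  rw [fiberwiseCoupling, Measure.map_finset_sum (by fun_prop), Measure.map_finset_sum (by fun_prop)]
  refine Finset.sum_congr rfl fun j _ => ?_
  rw [Measure.map_smul, Measure.map_smul, Measure.map_map (by fun_prop) (by fun_prop),
    Measure.map_dirac' (by fun_prop)]
  simp [Function.comp_def, Measure.map_const]

lemma isDiagonalCoupling_fiberwiseCoupling [∀ j, IsProbabilityMeasure (γ j)] :
    IsDiagonalCoupling (fiberwiseCoupling q γ) (stateMixture q fun j => (γ j).map Prod.fst)
      (stateMixture q fun j => (γ j).map Prod.snd) := by
  have : ∀ j, IsProbabilityMeasure ((γ j).map Prod.fst) := fun j =>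
    Measure.isProbabilityMeasure_map measurable_fst.aemeasurable
  exact ⟨map_fst_fiberwiseCoupling q γ, map_snd_fiberwiseCoupling q γ, by
    rw [map_states_fiberwiseCoupling, map_fst_stateMixture]⟩

lemma integral_dist_fiberwiseCoupling [PseudoMetricSpace Y] [OpensMeasurableSpace Y]
    [SecondCountableTopology Y] [BoundedSpace Y] [∀ j, IsFiniteMeasure (γ j)] :
    ∫ x, dist x.1.2 x.2.2 ∂(fiberwiseCoupling q γ) = ∑ j, (q j : ℝ) * ∫ y, dist y.1 y.2 ∂(γ j) := by
  rw [fiberwiseCoupling, integral_finsetSum_measure fun j _ =>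
    (integrable_dist_of_boundedSpace (by fun_prop) (by fun_prop)).smul_measure ENNReal.coe_ne_top]
  refine Finset.sum_congr rfl fun j _ => ?_
  rw [integral_smul_measure, integral_map (by fun_prop) (by fun_prop)]
  simp

end StateMixture

lemma ae_eq_of_map_eq_map_diag {X W : Type*} [MeasurableSpace X] [MeasurableSpace W] [Countable W]
    [MeasurableSingletonClass W] {α : Measure X} {Q : Measure W} {f g : X → W}
    (hf : Measurable f) (hg : Measurable g)
    (h : α.map (fun x => (f x, g x)) = Q.map fun w => (w, w)) :
    ∀ᵐ x ∂α, f x = g x := by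
  have hoff : MeasurableSet {p : W × W | p.1 ≠ p.2} := (Set.to_countable _).measurableSet
  rw [ae_iff]
  change α ((fun x => (f x, g x)) ⁻¹' {p : W × W | p.1 ≠ p.2}) = 0
  rw [← Measure.map_apply (hf.prodMk hg) hoff, h, Measure.map_apply (by fun_prop) hoff]
  simp

section Identity

variable {W Y : Type*} [Fintype W] [MeasurableSpace W] [PseudoMetricSpace Y] [MeasurableSpace Y]
  [OpensMeasurableSpace Y] [SecondCountableTopology Y] (q : W → ℝ≥0) (μ ν : W → Measure Y)

lemma eW1_stateMixture_le_sum_integral [BoundedSpace Y] (γ : W → Measure (Y × Y))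
    [∀ j, IsProbabilityMeasure (γ j)] (hfst : ∀ j, (γ j).map Prod.fst = μ j)
    (hsnd : ∀ j, (γ j).map Prod.snd = ν j) :
    eW1 (stateMixture q μ) (stateMixture q ν) ≤ ∑ j, (q j : ℝ) * ∫ y, dist y.1 y.2 ∂(γ j) := by
  have h := eW1_le_integral (isDiagonalCoupling_fiberwiseCoupling q γ)
  rwa [integral_dist_fiberwiseCoupling, funext hfst, funext hsnd] at h

lemma eW1_stateMixture_le [BoundedSpace Y] [∀ j, IsProbabilityMeasure (μ j)]
    [∀ j, IsProbabilityMeasure (ν j)] :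
    eW1 (stateMixture q μ) (stateMixture q ν) ≤ ∑ j, (q j : ℝ) * W1 (μ j) (ν j) := by
  refine le_of_forall_pos_le_add fun ε hε => ?_
  set S := ∑ j, (q j : ℝ)
  have hδ : 0 < ε / (S + 1) := by positivity
  choose γ hγ hfst hsnd hlt using fun j => exists_coupling_integral_lt_W1_add (μ j) (ν j) hδ
  calc eW1 (stateMixture q μ) (stateMixture q ν)
      ≤ ∑ j, (q j : ℝ) * ∫ y, dist y.1 y.2 ∂(γ j) :=
        eW1_stateMixture_le_sum_integral q μ ν γ hfst hsnd
    _ ≤ ∑ j, (q j : ℝ) * (W1 (μ j) (ν j) + ε / (S + 1)) :=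
        Finset.sum_le_sum fun j _ => mul_le_mul_of_nonneg_left (hlt j).le (q j).coe_nonneg
    _ = ∑ j, (q j : ℝ) * W1 (μ j) (ν j) + ε / (S + 1) * S := by
        simp only [mul_add, Finset.sum_add_distrib, ← Finset.sum_mul, S, mul_comm]
    _ ≤ ∑ j, (q j : ℝ) * W1 (μ j) (ν j) + ε := by
        gcongr
        rw [div_mul_eq_mul_div, div_le_iff₀ (by positivity)]
        nlinarith

variable [MeasurableSingletonClass W]

lemma mul_W1_le_setIntegral_fiber [∀ j, SFinite (μ j)] [∀ j, SFinite (ν j)] {α : Measure ((W × Y) × (W × Y))}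
    (hα : IsDiagonalCoupling α (stateMixture q μ) (stateMixture q ν)) (j : W) :
    q j * W1 (μ j) (ν j) ≤ ∫ x in {x | x.1.1 = j}, dist x.1.2 x.2.2 ∂α := by
  obtain ⟨hfst, hsnd, hstates⟩ := hα
  have hfiber : MeasurableSet (Prod.fst ⁻¹' {j} : Set (W × Y)) :=
    measurable_fst (measurableSet_singleton j)
  -- `α` lives on matching states, so its `j`-fibre can be cut out on either side.
  have hsame : α.restrict (Prod.fst ⁻¹' (Prod.fst ⁻¹' {j}))
      = α.restrict (Prod.snd ⁻¹' (Prod.fst ⁻¹' {j})) := by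
    refine Measure.restrict_congr_set (Filter.eventuallyEq_set.mpr ?_)
    filter_upwards [ae_eq_of_map_eq_map_diag (by fun_prop) (by fun_prop) hstates] with x hx
    simp [hx]
  have hmarg_fst := map_snd_restrict_stateMixture q μ j
  have hmarg_snd := map_snd_restrict_stateMixture q ν j
  rw [← hfst, Measure.restrict_map measurable_fst hfiber, Measure.map_map measurable_snd
    measurable_fst] at hmarg_fst
  rw [← hsnd, Measure.restrict_map measurable_snd hfiber, ← hsame, Measure.map_map measurable_snd
    measurable_snd] at hmarg_snd
  have hcost := mul_W1_le_integral (γ := (α.restrict {x | x.1.1 = j}).map fun x => (x.1.2, x.2.2))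
    (by rw [Measure.map_map (by fun_prop) (by fun_prop)]; exact hmarg_fst)
    (by rw [Measure.map_map (by fun_prop) (by fun_prop)]; exact hmarg_snd)
  rwa [integral_map (by fun_prop) (by fun_prop)] at hcost

lemma sum_mul_W1_le_integral [BoundedSpace Y] [∀ j, IsFiniteMeasure (μ j)]
    [∀ j, SFinite (ν j)] {α : Measure ((W × Y) × (W × Y))}
    (hα : IsDiagonalCoupling α (stateMixture q μ) (stateMixture q ν)) :
    ∑ j, q j * W1 (μ j) (ν j) ≤ ∫ x, dist x.1.2 x.2.2 ∂α := by
  have : IsFiniteMeasure α := by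
    rw [← Measure.isFiniteMeasure_map_iff measurable_fst.aemeasurable, hα.1]
    infer_instance
  have hcover : ⋃ j, {x : (W × Y) × (W × Y) | x.1.1 = j} = univ :=
    iUnion_eq_univ_iff.mpr fun x => ⟨x.1.1, rfl⟩
  calc ∑ j, q j * W1 (μ j) (ν j)
      ≤ ∑ j, ∫ x in {x | x.1.1 = j}, dist x.1.2 x.2.2 ∂α :=
        Finset.sum_le_sum fun j _ => mul_W1_le_setIntegral_fiber q μ ν hα j
    _ = ∫ x in ⋃ j, {x | x.1.1 = j}, dist x.1.2 x.2.2 ∂α :=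
        (integral_iUnion_fintype (fun j => measurable_fst.fst (measurableSet_singleton j))
          (pairwise_disjoint_fiber fun x : (W × Y) × (W × Y) => x.1.1) fun _ =>
          (integrable_dist_of_boundedSpace (by fun_prop) (by fun_prop)).integrableOn).symm
    _ = ∫ x, dist x.1.2 x.2.2 ∂α := by rw [hcover, setIntegral_univ]

theorem eW1_stateMixture [BoundedSpace Y] [∀ j, IsProbabilityMeasure (μ j)]
    [∀ j, IsProbabilityMeasure (ν j)] :
    eW1 (stateMixture q μ) (stateMixture q ν) = ∑ j, (q j : ℝ) * W1 (μ j) (ν j) := by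
  have hprod := isDiagonalCoupling_fiberwiseCoupling q fun j => (μ j).prod (ν j)
  simp only [Measure.map_fst_prod, Measure.map_snd_prod, measure_univ, one_smul] at hprod
  refine le_antisymm (eW1_stateMixture_le q μ ν) (le_csInf ⟨_, _, hprod, rfl⟩ ?_)
  rintro _ ⟨α, hα, rfl⟩
  exact sum_mul_W1_le_integral q μ ν hα

end Identity

theorem stmt9_general (M : ℕ)
    {p : ℕ} (K : Set (EuclideanSpace ℝ (Fin p))) (hK : IsCompact K)
    (q : Fin M → ℝ≥0)
    (μ ν : Fin M → Measure ↥K)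
    [∀ j, IsProbabilityMeasure (μ j)] [∀ j, IsProbabilityMeasure (ν j)] :
    eW1 (∑ j, (q j : ℝ≥0∞) • ((Measure.dirac j).prod (μ j)))
        (∑ j, (q j : ℝ≥0∞) • ((Measure.dirac j).prod (ν j)))
      = ∑ j, (q j : ℝ) * W1 (μ j) (ν j) := by
  have : CompactSpace K := isCompact_iff_compactSpace.mp hK
  exact eW1_stateMixture q μ ν

theorem stmt9 (M : ℕ) (hM : 0 < M)
    {p : ℕ} (K : Set (EuclideanSpace ℝ (Fin p))) (hK : IsCompact K)
    (q : Fin M → ℝ≥0) (hq : ∑ j, q j = 1)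
    (μ ν : Fin M → Measure ↥K)
    [∀ j, IsProbabilityMeasure (μ j)] [∀ j, IsProbabilityMeasure (ν j)] :
    eW1 (∑ j, (q j : ℝ≥0∞) • ((Measure.dirac j).prod (μ j)))
        (∑ j, (q j : ℝ≥0∞) • ((Measure.dirac j).prod (ν j)))
      = ∑ j, (q j : ℝ) * W1 (μ j) (ν j) :=
  stmt9_general M K hK q μ ν
end

section
/- Let d be a positive integer and m ∈ ℕ^d. Let 𝓑_δ denote the set of points w ∈ [0,1]^d within Euclidean distance δ of the union of the boundaries of the cells of the anisotropic dyadic partition Π_m. (i) If Q_ρ is a probability measure on [0,1]^d with Lebesgue density bounded above by q̄ < ∞, then for all 0 < δ ≤ 1, Q_ρ(𝓑_δ) ≤ C · q̄ · δ · Σ_{j=1}^d 2^{m_j}, where C depends only on d. (ii) Let the cells of Π_m be enumerated C_1,…,C_K, let r_k(w) = 1{w ∈ C_k}, and let γ_k : [0,1]^d → [0,1] satisfy Σ_{k=1}^K γ_k(w) = 1 for all w. If Σ_k |γ_k(w) − r_k(w)| ≤ A·exp(−c₀δ/τ) for all w ∉ 𝓑_δ (with constants A, c₀, τ > 0), then η_ρ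 := ∫ Σ_{k=1}^K |γ_k(w) − r_k(w)| dQ_ρ(w) ≤ 2·Q_ρ(𝓑_δ) + A·exp(−c₀δ/τ). -/
open MeasureTheory
open scoped ENNReal

noncomputable def dyI (m k : ℕ) : Set ℝ :=
  if k + 1 = 2 ^ m then Set.Icc ((k : ℝ) / 2 ^ m) 1
  else Set.Ico ((k : ℝ) / 2 ^ m) (((k : ℝ) + 1) / 2 ^ m)

/-- Cell of `Π_m` inside `ℝ^d` with the Euclidean metric. -/
noncomputable def dyCellE {d : ℕ} (m : Fin d → ℕ) (k : ∀ j, Fin (2 ^ m j)) :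
    Set (EuclideanSpace ℝ (Fin d)) :=
  {w | ∀ j, w j ∈ dyI (m j) (k j)}

/-- The boundary layer `𝓑_δ`: points of the unit cube within Euclidean distance `δ`
of the union of the boundaries of the cells of `Π_m`. -/
noncomputable def bdryLayer {d : ℕ} (m : Fin d → ℕ) (δ : ℝ) :
    Set (EuclideanSpace ℝ (Fin d)) :=
  {w | (∀ j, w j ∈ Set.Icc (0 : ℝ) 1) ∧
    Metric.infDist w (⋃ k : (∀ j, Fin (2 ^ m j)), frontier (dyCellE m k)) ≤ δ}

/-!
A point within distance `δ` of a cell boundary is within `δ`, in some coordinate `j`, of a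
grid value `i / 2 ^ m j`, because a cell's frontier lies on the grid hyperplanes and the
Euclidean distance dominates every coordinate difference. Hence `𝓑_δ` is covered by
`∑ j (2 ^ m j + 1)` slabs of width `2δ` inside the cube, each of Lebesgue measure `2δ`.
For (ii), the gate error `∑ k |γ k - r k|` is at most `∑ k γ k + ∑ k r k ≤ 2` everywhere,
the cells being disjoint, and at most `A e^{-c₀δ/τ}` off `𝓑_δ`.
-/

open MeasureTheory Set Function

lemma Finset.sum_abs_sub_le_sum_add_sum {ι : Type*} (s : Finset ι) {a b : ι → ℝ}
    (ha : ∀ i ∈ s, 0 ≤ a i) (hb : ∀ i ∈ s, 0 ≤ b i) :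
    ∑ i ∈ s, |a i - b i| ≤ ∑ i ∈ s, a i + ∑ i ∈ s, b i := by
  rw [← Finset.sum_add_distrib]
  refine Finset.sum_le_sum fun i hi => ?_
  simpa [abs_of_nonneg (ha i hi), abs_of_nonneg (hb i hi)] using abs_sub (a i) (b i)

lemma integral_le_mul_measureReal_add {X : Type*} [MeasurableSpace X] {μ : Measure X}
    [IsProbabilityMeasure μ] {f : X → ℝ} {B : Set X} {M ε : ℝ} (hB : MeasurableSet B)
    (hf : AEStronglyMeasurable f μ) (hfM : ∀ x, ‖f x‖ ≤ M) (hε : 0 ≤ ε)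
    (hf_off : ∀ᵐ x ∂μ, x ∉ B → f x ≤ ε) :
    ∫ x, f x ∂μ ≤ M * μ.real B + ε := by
  have hg : Integrable (fun x => B.indicator (fun _ => M) x + ε) μ :=
    ((integrable_const M).indicator hB).add (integrable_const ε)
  calc ∫ x, f x ∂μ ≤ ∫ x, B.indicator (fun _ => M) x + ε ∂μ := by
        refine integral_mono_ae ((integrable_const M).mono' hf (.of_forall hfM)) hg ?_
        filter_upwards [hf_off] with x hx
        by_cases hxB : x ∈ B
        · simpa [hxB] using (le_abs_self _).trans ((hfM x).trans (le_add_of_nonneg_right hε))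
        · simpa [hxB] using hx hxB
    _ = M * μ.real B + ε := by
        rw [integral_add ((integrable_const M).indicator hB) (integrable_const ε),
          integral_indicator_const _ hB]
        simp [mul_comm]

lemma dyI_eq_Icc {m k : ℕ} (h : k + 1 = 2 ^ m) :
    dyI m k = Icc ((k : ℝ) / 2 ^ m) (((k : ℝ) + 1) / 2 ^ m) := by
  have : ((k : ℝ) + 1) / 2 ^ m = 1 := by
    rw [div_eq_one_iff_eq (by positivity)]
    exact_mod_cast h
  rw [dyI, if_pos h, this]

lemma dyI_eq_Ico {m k : ℕ} (h : k + 1 ≠ 2 ^ m) :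
    dyI m k = Ico ((k : ℝ) / 2 ^ m) (((k : ℝ) + 1) / 2 ^ m) :=
  if_neg h

lemma dyI_subset_Icc (m k : ℕ) :
    dyI m k ⊆ Icc ((k : ℝ) / 2 ^ m) (((k : ℝ) + 1) / 2 ^ m) := by
  by_cases h : k + 1 = 2 ^ m
  · exact (dyI_eq_Icc h).subset
  · exact (dyI_eq_Ico h).trans_subset Ico_subset_Icc_self

lemma Ioo_subset_dyI (m k : ℕ) :
    Ioo ((k : ℝ) / 2 ^ m) (((k : ℝ) + 1) / 2 ^ m) ⊆ dyI m k := by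
  by_cases h : k + 1 = 2 ^ m
  · exact (dyI_eq_Icc h).symm ▸ Ioo_subset_Icc_self
  · exact (dyI_eq_Ico h).symm ▸ Ioo_subset_Ico_self

lemma zero_mem_dyI (m : ℕ) : (0 : ℝ) ∈ dyI m 0 := by
  unfold dyI
  split_ifs <;> simp

lemma disjoint_dyI_of_lt {m k k' : ℕ} (hkk' : k < k') (hk' : k' < 2 ^ m) :
    Disjoint (dyI m k) (dyI m k') := by
  refine Set.disjoint_left.2 fun x hx hx' => ?_
  have hx_lt : x < ((k : ℝ) + 1) / 2 ^ m := by
    rw [dyI_eq_Ico (show k + 1 ≠ 2 ^ m by omega)] at hx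
    exact hx.2
  have hx_ge : (k' : ℝ) / 2 ^ m ≤ x := (dyI_subset_Icc m k' hx').1
  have : ((k : ℝ) + 1) / 2 ^ m ≤ (k' : ℝ) / 2 ^ m := by
    gcongr
    exact_mod_cast hkk'
  linarith

lemma pairwise_disjoint_dyI (m : ℕ) :
    Pairwise (Disjoint on fun k : Fin (2 ^ m) => dyI m k) := by
  intro k k' hne
  rcases Fin.lt_or_lt_of_ne hne with h | h
  · exact disjoint_dyI_of_lt h k'.isLt
  · exact (disjoint_dyI_of_lt h k.isLt).symm

namespace EuclideanSpace

variable {d : ℕ}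

lemma setOf_forall_mem_eq_preimage_pi (A : Fin d → Set ℝ) :
    {w : EuclideanSpace ℝ (Fin d) | ∀ j, w j ∈ A j} = WithLp.ofLp ⁻¹' univ.pi A := by
  ext w
  simp

lemma measurableSet_setOf_forall_mem {A : Fin d → Set ℝ} (hA : ∀ j, MeasurableSet (A j)) :
    MeasurableSet {w : EuclideanSpace ℝ (Fin d) | ∀ j, w j ∈ A j} := by
  rw [setOf_forall_mem_eq_preimage_pi]
  exact (MeasurableSet.univ_pi hA).preimage (WithLp.measurable_ofLp 2 _)

lemma isClosed_setOf_forall_mem {A : Fin d → Set ℝ} (hA : ∀ j, IsClosed (A j)) :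
    IsClosed {w : EuclideanSpace ℝ (Fin d) | ∀ j, w j ∈ A j} := by
  rw [setOf_forall_mem_eq_preimage_pi]
  exact (isClosed_set_pi fun j _ => hA j).preimage (PiLp.continuous_ofLp 2 _)

lemma isOpen_setOf_forall_mem {A : Fin d → Set ℝ} (hA : ∀ j, IsOpen (A j)) :
    IsOpen {w : EuclideanSpace ℝ (Fin d) | ∀ j, w j ∈ A j} := by
  rw [setOf_forall_mem_eq_preimage_pi]
  exact (isOpen_set_pi finite_univ fun j _ => hA j).preimage (PiLp.continuous_ofLp 2 _)

lemma volume_setOf_forall_mem {A : Fin d → Set ℝ} (hA : ∀ j, MeasurableSet (A j)) :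
    volume {w : EuclideanSpace ℝ (Fin d) | ∀ j, w j ∈ A j} = ∏ j, volume (A j) := by
  rw [setOf_forall_mem_eq_preimage_pi, (PiLp.volume_preserving_ofLp (Fin d)).measure_preimage
    (MeasurableSet.univ_pi hA).nullMeasurableSet, volume_pi_pi]

end EuclideanSpace

section Cells

open EuclideanSpace

variable {d : ℕ} (m : Fin d → ℕ)

lemma measurableSet_dyCellE (k : ∀ j, Fin (2 ^ m j)) : MeasurableSet (dyCellE m k) :=
  measurableSet_setOf_forall_mem fun j => by
    unfold dyI
    split_ifs
    exacts [measurableSet_Icc, measurableSet_Ico]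

lemma pairwise_disjoint_dyCellE : Pairwise (Disjoint on dyCellE m) := by
  intro k k' hne
  obtain ⟨j, hj⟩ := Function.ne_iff.1 hne
  exact Set.disjoint_left.2 fun w hw hw' =>
    Set.disjoint_left.1 (pairwise_disjoint_dyI (m j) hj) (hw j) (hw' j)

lemma sum_indicator_dyCellE_le_one (w : EuclideanSpace ℝ (Fin d)) :
    ∑ k, (dyCellE m k).indicator (fun _ => (1 : ℝ)) w ≤ 1 := by
  rw [← Finset.indicator_biUnion_apply _ _ fun k _ k' _ h => pairwise_disjoint_dyCellE m h]
  exact indicator_apply_le' (fun _ => le_rfl) (fun _ => zero_le_one)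

lemma exists_eq_div_of_mem_frontier_dyCellE {k : ∀ j, Fin (2 ^ m j)}
    {w : EuclideanSpace ℝ (Fin d)} (hw : w ∈ frontier (dyCellE m k)) :
    ∃ j, ∃ i : ℕ, i ≤ 2 ^ m j ∧ w j = (i : ℝ) / 2 ^ m j := by
  have h_closure : w ∈ {v : EuclideanSpace ℝ (Fin d) |
      ∀ j, v j ∈ Icc (((k j : ℕ) : ℝ) / 2 ^ m j) ((((k j : ℕ) : ℝ) + 1) / 2 ^ m j)} :=
    closure_minimal (fun v (hv : v ∈ dyCellE m k) j => dyI_subset_Icc _ _ (hv j))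
      (isClosed_setOf_forall_mem fun _ => isClosed_Icc) hw.1
  have h_open_box : {v : EuclideanSpace ℝ (Fin d) |
      ∀ j, v j ∈ Ioo (((k j : ℕ) : ℝ) / 2 ^ m j) ((((k j : ℕ) : ℝ) + 1) / 2 ^ m j)} ⊆
      interior (dyCellE m k) :=
    interior_maximal (fun v hv j => Ioo_subset_dyI _ _ (hv j))
      (isOpen_setOf_forall_mem fun _ => isOpen_Ioo)
  have h_interior :
      ¬ ∀ j, w j ∈ Ioo (((k j : ℕ) : ℝ) / 2 ^ m j) ((((k j : ℕ) : ℝ) + 1) / 2 ^ m j) :=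
    fun hv => hw.2 (h_open_box hv)
  push Not at h_interior
  obtain ⟨j, hj⟩ := h_interior
  rcases (h_closure j).1.eq_or_lt with hlow | hlow
  · exact ⟨j, (k j : ℕ), (k j).isLt.le, hlow.symm⟩
  rcases (h_closure j).2.eq_or_lt with hhigh | hhigh
  · exact ⟨j, (k j : ℕ) + 1, (k j).isLt, by rw [hhigh]; push_cast; rfl⟩
  · exact absurd ⟨hlow, hhigh⟩ hj

lemma nonempty_iUnion_frontier_dyCellE (hd : 0 < d) :
    (⋃ k, frontier (dyCellE m k)).Nonempty := by
  let k₀ : ∀ j, Fin (2 ^ m j) := fun j => ⟨0, Nat.two_pow_pos _⟩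
  have h_mem : (0 : EuclideanSpace ℝ (Fin d)) ∈ dyCellE m k₀ := fun j => zero_mem_dyI (m j)
  have h_not_mem : WithLp.toLp 2 (fun _ => (-1 : ℝ)) ∉ dyCellE m k₀ := fun h => by
    have := (dyI_subset_Icc _ _ (h ⟨0, hd⟩)).1
    norm_num [k₀] at this
  obtain ⟨w, hw⟩ := nonempty_frontier_iff.2
    ⟨⟨0, h_mem⟩, (ne_univ_iff_exists_notMem _).2 ⟨_, h_not_mem⟩⟩
  exact ⟨w, mem_iUnion.2 ⟨k₀, hw⟩⟩

lemma isClosed_bdryLayer (δ : ℝ) : IsClosed (bdryLayer m δ) :=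
  (isClosed_setOf_forall_mem fun _ => isClosed_Icc).inter
    (isClosed_le (Metric.continuous_infDist_pt _) continuous_const)

lemma exists_abs_sub_div_le_of_mem_bdryLayer (hd : 0 < d) {δ : ℝ}
    {w : EuclideanSpace ℝ (Fin d)} (hw : w ∈ bdryLayer m δ) :
    ∃ j, ∃ i : ℕ, i ≤ 2 ^ m j ∧ |w j - (i : ℝ) / 2 ^ m j| ≤ δ := by
  obtain ⟨y, hy, hwy⟩ := (isClosed_iUnion_of_finite fun k =>
    isClosed_frontier).exists_infDist_eq_dist (nonempty_iUnion_frontier_dyCellE m hd) w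
  obtain ⟨k, hk⟩ := mem_iUnion.1 hy
  obtain ⟨j, i, hi, hyj⟩ := exists_eq_div_of_mem_frontier_dyCellE m hk
  refine ⟨j, i, hi, ?_⟩
  calc |w j - (i : ℝ) / 2 ^ m j| = dist (w j) (y j) := by rw [hyj, Real.dist_eq]
    _ ≤ dist w y := PiLp.dist_apply_le w y j
    _ ≤ δ := hwy ▸ hw.2

end Cells

section BoundaryLayerMeasure

open EuclideanSpace

variable {d : ℕ}

def cubeSlab (j : Fin d) (a δ : ℝ) : Set (EuclideanSpace ℝ (Fin d)) :=
  {w | ∀ j', w j' ∈ update (fun _ => Icc (0 : ℝ) 1) j (Icc (a - δ) (a + δ)) j'}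

lemma measurableSet_cubeSlab (j : Fin d) (a δ : ℝ) : MeasurableSet (cubeSlab j a δ) :=
  measurableSet_setOf_forall_mem fun j' => by
    by_cases j' = j <;> simp [*]

lemma volume_cubeSlab (j : Fin d) (a δ : ℝ) :
    volume (cubeSlab j a δ) = ENNReal.ofReal (2 * δ) := by
  rw [cubeSlab, volume_setOf_forall_mem fun j' => ?_]
  · simp only [apply_update (fun _ (s : Set ℝ) => volume s),
      Finset.prod_update_of_mem (Finset.mem_univ j), Real.volume_Icc, sub_zero, ENNReal.ofReal_one,
      Finset.prod_const_one, mul_one]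
    ring_nf
  · by_cases j' = j <;> simp [*]

lemma bdryLayer_subset_iUnion_cubeSlab (hd : 0 < d) (m : Fin d → ℕ) (δ : ℝ) :
    bdryLayer m δ ⊆ ⋃ j, ⋃ i : Fin (2 ^ m j + 1), cubeSlab j ((i : ℝ) / 2 ^ m j) δ := by
  intro w hw
  obtain ⟨j, i, hi, hwi⟩ := exists_abs_sub_div_le_of_mem_bdryLayer m hd hw
  refine mem_iUnion₂.2 ⟨j, ⟨i, Nat.lt_succ_of_le hi⟩, fun j' => ?_⟩
  rcases eq_or_ne j' j with rfl | h
  · simp only [update_self, mem_Icc]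
    constructor <;> linarith [abs_le.1 hwi]
  · simpa [h] using hw.1 j'

theorem measureReal_bdryLayer_le (hd : 0 < d) (m : Fin d → ℕ)
    {Q : Measure (EuclideanSpace ℝ (Fin d))} {qbar δ : ℝ} (hq : 0 ≤ qbar) (hδ : 0 ≤ δ)
    (hQ : ∀ s, MeasurableSet s → Q s ≤ ENNReal.ofReal qbar * volume s) :
    Q.real (bdryLayer m δ) ≤ 4 * qbar * δ * ∑ j, (2 : ℝ) ^ m j := by
  have h_slab : ∀ j a, Q (cubeSlab j a δ) ≤ ENNReal.ofReal (qbar * (2 * δ)) := fun j a => by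
    simpa [volume_cubeSlab, ENNReal.ofReal_mul hq] using hQ _ (measurableSet_cubeSlab j a δ)
  have h_count : ∑ j, ((2 : ℝ) ^ m j + 1) * (qbar * (2 * δ)) ≤
      4 * qbar * δ * ∑ j, (2 : ℝ) ^ m j := by
    rw [Finset.mul_sum]
    refine Finset.sum_le_sum fun j _ => ?_
    have : (1 : ℝ) ≤ 2 ^ m j := one_le_pow₀ one_le_two
    nlinarith [mul_nonneg hq hδ]
  refine ENNReal.toReal_le_of_le_ofReal (by positivity) ?_
  calc Q (bdryLayer m δ)
      ≤ Q (⋃ j, ⋃ i : Fin (2 ^ m j + 1), cubeSlab j ((i : ℝ) / 2 ^ m j) δ) :=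
        measure_mono (bdryLayer_subset_iUnion_cubeSlab hd m δ)
    _ ≤ ∑ j, ∑ i : Fin (2 ^ m j + 1), Q (cubeSlab j ((i : ℝ) / 2 ^ m j) δ) :=
        (measure_iUnion_fintype_le _ _).trans
          (Finset.sum_le_sum fun j _ => measure_iUnion_fintype_le _ _)
    _ ≤ ∑ j, ∑ _i : Fin (2 ^ m j + 1), ENNReal.ofReal (qbar * (2 * δ)) := by
        gcongr with j _ i
        exact h_slab _ _
    _ = ENNReal.ofReal (∑ j, ((2 : ℝ) ^ m j + 1) * (qbar * (2 * δ))) := by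
        rw [ENNReal.ofReal_sum_of_nonneg fun j _ => by positivity]
        refine Finset.sum_congr rfl fun j _ => ?_
        rw [Finset.sum_const, Finset.card_univ, Fintype.card_fin, nsmul_eq_mul,
          ← ENNReal.ofReal_natCast, ← ENNReal.ofReal_mul (by positivity)]
        push_cast
        rfl
    _ ≤ ENNReal.ofReal (4 * qbar * δ * ∑ j, (2 : ℝ) ^ m j) :=
        ENNReal.ofReal_le_ofReal h_count

end BoundaryLayerMeasure

section SoftGates

variable {d : ℕ} (m : Fin d → ℕ)
  {γ : (∀ j, Fin (2 ^ m j)) → EuclideanSpace ℝ (Fin d) → ℝ}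

lemma sum_abs_sub_indicator_dyCellE_le_two (hγ_nonneg : ∀ k w, 0 ≤ γ k w)
    (hγ_sum : ∀ w, ∑ k, γ k w = 1) (w : EuclideanSpace ℝ (Fin d)) :
    ∑ k, |γ k w - (dyCellE m k).indicator (fun _ => (1 : ℝ)) w| ≤ 2 := by
  have := Finset.sum_abs_sub_le_sum_add_sum Finset.univ (fun k _ => hγ_nonneg k w)
    (fun k _ => indicator_nonneg (s := dyCellE m k) (fun _ _ => zero_le_one) w)
  linarith [hγ_sum w, sum_indicator_dyCellE_le_one m w]

theorem integral_sum_abs_sub_indicator_dyCellE_le {Q : Measure (EuclideanSpace ℝ (Fin d))}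
    [IsProbabilityMeasure Q] (hcube : Q {w | ∀ j, w j ∈ Icc (0 : ℝ) 1} = 1)
    (hγ_meas : ∀ k, Measurable (γ k)) (hγ_nonneg : ∀ k w, 0 ≤ γ k w)
    (hγ_sum : ∀ w, ∑ k, γ k w = 1) {ε δ : ℝ} (hε : 0 ≤ ε)
    (hγ_off : ∀ w : EuclideanSpace ℝ (Fin d), (∀ j, w j ∈ Icc (0 : ℝ) 1) →
      w ∉ bdryLayer m δ →
        ∑ k, |γ k w - (dyCellE m k).indicator (fun _ => (1 : ℝ)) w| ≤ ε) :
    ∫ w, ∑ k, |γ k w - (dyCellE m k).indicator (fun _ => (1 : ℝ)) w| ∂Q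
      ≤ 2 * Q.real (bdryLayer m δ) + ε := by
  have h_ae_cube : ∀ᵐ w ∂Q, ∀ j, w j ∈ Icc (0 : ℝ) 1 :=
    (mem_ae_iff_prob_eq_one
      (EuclideanSpace.measurableSet_setOf_forall_mem fun _ => measurableSet_Icc)).2 hcube
  have h_meas :
      Measurable fun w => ∑ k, |γ k w - (dyCellE m k).indicator (fun _ => (1 : ℝ)) w| :=
    Finset.measurable_sum _ fun k _ =>
      ((hγ_meas k).sub (measurable_const.indicator (measurableSet_dyCellE m k))).abs
  refine integral_le_mul_measureReal_add (isClosed_bdryLayer m δ).measurableSet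
    h_meas.aestronglyMeasurable (fun w => ?_) hε ?_
  · rw [Real.norm_of_nonneg (Finset.sum_nonneg fun _ _ => abs_nonneg _)]
    exact sum_abs_sub_indicator_dyCellE_le_two m hγ_nonneg hγ_sum w
  · filter_upwards [h_ae_cube] with w hw
    exact hγ_off w hw

end SoftGates

theorem stmt12 (d : ℕ) (hd : 0 < d) :
    -- (i)
    (∃ C : ℝ, 0 < C ∧ ∀ (m : Fin d → ℕ) (Qρ : Measure (EuclideanSpace ℝ (Fin d))),
      IsProbabilityMeasure Qρ →
      ∀ qbar : ℝ, 0 ≤ qbar →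
      (∀ s : Set (EuclideanSpace ℝ (Fin d)), MeasurableSet s →
        Qρ s ≤ ENNReal.ofReal qbar * volume s) →
      ∀ δ : ℝ, δ ∈ Set.Ioc (0 : ℝ) 1 →
      (Qρ (bdryLayer m δ)).toReal ≤ C * qbar * δ * ∑ j, (2 : ℝ) ^ (m j)) ∧
    -- (ii)
    (∀ (m : Fin d → ℕ) (Qρ : Measure (EuclideanSpace ℝ (Fin d))),
      IsProbabilityMeasure Qρ →
      Qρ {w | ∀ j, w j ∈ Set.Icc (0 : ℝ) 1} = 1 →
      ∀ γ : (∀ j, Fin (2 ^ m j)) → EuclideanSpace ℝ (Fin d) → ℝ,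
      (∀ k, Measurable (γ k)) →
      (∀ k w, γ k w ∈ Set.Icc (0 : ℝ) 1) →
      (∀ w, ∑ k, γ k w = 1) →
      ∀ A c₀ τ δ : ℝ, 0 < A → 0 < c₀ → 0 < τ → δ ∈ Set.Ioc (0 : ℝ) 1 →
      (∀ w : EuclideanSpace ℝ (Fin d), (∀ j, w j ∈ Set.Icc (0 : ℝ) 1) →
        w ∉ bdryLayer m δ →
        ∑ k, |γ k w - Set.indicator (dyCellE m k) (fun _ => (1 : ℝ)) w|
          ≤ A * Real.exp (-(c₀ * δ) / τ)) →
      ∫ w, ∑ k, |γ k w - Set.indicator (dyCellE m k) (fun _ => (1 : ℝ)) w| ∂Qρ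
        ≤ 2 * (Qρ (bdryLayer m δ)).toReal + A * Real.exp (-(c₀ * δ) / τ)) := by
  refine ⟨⟨4, by norm_num, fun m Qρ _ qbar hq hdens δ hδ =>
    measureReal_bdryLayer_le hd m hq hδ.1.le hdens⟩, ?_⟩
  intro m Qρ _ hcube γ hγ_meas hγ_mem hγ_sum A c₀ τ δ hA _ _ _ hγ_off
  exact integral_sum_abs_sub_indicator_dyCellE_le m hcube hγ_meas (fun k w => (hγ_mem k w).1)
    hγ_sum (by positivity) hγ_off
end

section
/- Let 𝒴 ⊆ ℝ^p be compact with diameter diam(𝒴), d a positive integer, m ∈ ℕ^d, and Q_ρ a probability measure on [0,1]^d assigning positive mass q_{C_k} > 0 to each cell C_k of Π_m (cells enumerated C_1,…,C_K). Let r_k(w) = 1{w ∈ C_k}, let γ_k : [0,1]^d → [0,1] be measurable with Σ_{k=1}^K γ_k(w) = 1 for all w, and set η_ρ = ∫ Σ_{k=1}^K |γ_k(w) − r_k(w)| dQ_ρ(w). For Borel probability measures ν_1,…,ν_K on 𝒴, define the soft law ν_w^{soft} = Σ_k γ_k(w) ν_k and the cell averages ν_{soft,C_k}^ρ = q_{C_k}^{−1}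 ∫_{C_k} ν_w^{soft} dQ_ρ(w). Then (i) Σ_{k=1}^K q_{C_k} · W₁(ν_{soft,C_k}^ρ, ν_k) ≤ diam(𝒴) · η_ρ, and (ii) ∫ W₁(ν_w^{soft}, ν_{soft,C_m(w)}^ρ) dQ_ρ(w) ≤ 2·diam(𝒴)·η_ρ, where C_m(w) denotes the cell of Π_m containing w. -/
/-!
Both bounds rest on one estimate for mixtures of the same experts: two mixtures whose weight
vectors `a`, `b` have equal total mass are coupled by leaving the common part `min a b` on the
diagonal, which costs nothing, and moving the remainder by the independent coupling, which costs
at most `diam 𝒴` per unit of mass; hence `W₁ ≤ diam 𝒴 · Σ |a k - b k|`.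

The cell average of the soft law over `C_k` is the mixture with the gates averaged over `C_k`,
`ḡ_k`, while on `C_k` the hard gate is `k`. Hence `W₁(ν̄_k, ν_k) ≤ 2 diam 𝒴 (1 - ḡ_kk)`, and the
gate error integrates over `C_k` to exactly `2 q_k (1 - ḡ_kk)`; summing gives (i). For (ii),
compare the soft gate at `w` with `ḡ_{C(w)}` through the hard gate at `w`: the first leg is the
pointwise gate error and the second the cell term of (i), so the bound doubles.
-/

open MeasureTheory
open scoped ENNReal

noncomputable def dyCell {d : ℕ} (m : Fin d → ℕ) (k : ∀ j, Fin (2 ^ m j)) :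
    Set (Fin d → ℝ) :=
  {w | ∀ j, w j ∈ dyI (m j) (k j)}

/-- The index of the cell of `Π_m` containing `w` (for `w` in the unit cube). -/
noncomputable def cellIndexOf {d : ℕ} (m : Fin d → ℕ) (w : Fin d → ℝ) :
    ∀ j, Fin (2 ^ m j) :=
  fun j => ⟨min ⌊w j * 2 ^ m j⌋₊ (2 ^ m j - 1),
    lt_of_le_of_lt (min_le_right _ _)
      (Nat.sub_lt (pow_pos (by norm_num) _) one_pos)⟩

open Set

section Coupling

variable {Y : Type*} [MeasurableSpace Y]

def IsCoupling (π : Measure (Y × Y)) (η ζ : Measure Y) : Prop :=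
  π.map Prod.fst = η ∧ π.map Prod.snd = ζ

lemma IsCoupling.add {π π' : Measure (Y × Y)} {η ζ η' ζ' : Measure Y}
    (h : IsCoupling π η ζ) (h' : IsCoupling π' η' ζ') :
    IsCoupling (π + π') (η + η') (ζ + ζ') :=
  ⟨by rw [Measure.map_add _ _ measurable_fst, h.1, h'.1],
    by rw [Measure.map_add _ _ measurable_snd, h.2, h'.2]⟩

lemma IsCoupling.measure_univ {π : Measure (Y × Y)} {η ζ : Measure Y}
    (h : IsCoupling π η ζ) : π univ = η univ := by
  rw [← h.1, Measure.map_apply measurable_fst MeasurableSet.univ, preimage_univ]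

lemma isCoupling_map_diag (α : Measure Y) : IsCoupling (α.map fun y => (y, y)) α α := by
  have hΔ : Measurable fun y : Y => (y, y) := by fun_prop
  exact ⟨by rw [Measure.map_map measurable_fst hΔ]; exact Measure.map_id,
    by rw [Measure.map_map measurable_snd hΔ]; exact Measure.map_id⟩

lemma inv_measure_univ_smul_smul (μ : Measure Y) [IsFiniteMeasure μ] :
    (μ univ)⁻¹ • μ univ • μ = μ := by
  by_cases h : μ = 0
  · simp [h]
  · rw [smul_smul, ENNReal.inv_mul_cancel (by simpa using h) (measure_ne_top _ _), one_smul]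

lemma isCoupling_smul_prod {β β' : Measure Y} [IsFiniteMeasure β] [IsFiniteMeasure β']
    (h : β univ = β' univ) : IsCoupling ((β univ)⁻¹ • β.prod β') β β' := by
  constructor
  · rw [Measure.map_smul, Measure.map_fst_prod, ← h, inv_measure_univ_smul_smul]
  · rw [Measure.map_smul, Measure.map_snd_prod, h, inv_measure_univ_smul_smul]

variable [PseudoMetricSpace Y]

lemma W1_le_integral_dist {π : Measure (Y × Y)} {η ζ : Measure Y} (h : IsCoupling π η ζ) :
    W1 η ζ ≤ ∫ q, dist q.1 q.2 ∂π :=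
  csInf_le ⟨0, by rintro _ ⟨_, -, rfl⟩; exact integral_nonneg fun _ => dist_nonneg⟩ ⟨π, h, rfl⟩

lemma W1_nonneg (η ζ : Measure Y) : 0 ≤ W1 η ζ :=
  Real.sInf_nonneg (by rintro _ ⟨_, -, rfl⟩; exact integral_nonneg fun _ => dist_nonneg)

variable [OpensMeasurableSpace Y] [SecondCountableTopology Y]

lemma lintegral_dist_map_diag (α : Measure Y) :
    ∫⁻ q, ENNReal.ofReal (dist q.1 q.2) ∂(α.map fun y => (y, y)) = 0 := by
  rw [lintegral_map measurable_dist.ennreal_ofReal (by fun_prop)]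
  simp

lemma W1_add_le [BoundedSpace Y] (α β β' : Measure Y) [IsFiniteMeasure β] [IsFiniteMeasure β']
    (h : β univ = β' univ) :
    W1 (α + β) (α + β') ≤ Metric.diam (univ : Set Y) * (β univ).toReal := by
  set D := Metric.diam (univ : Set Y)
  have hD : ∀ x y : Y, dist x y ≤ D := fun x y =>
    Metric.dist_le_diam_of_mem (Bornology.IsBounded.all _) (mem_univ x) (mem_univ y)
  have hcross := isCoupling_smul_prod h
  set π := α.map (fun y => (y, y)) + (β univ)⁻¹ • β.prod β'
  have hcost : ∫⁻ q, ENNReal.ofReal (dist q.1 q.2) ∂π ≤ ENNReal.ofReal D * β univ := by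
    rw [lintegral_add_measure, lintegral_dist_map_diag, zero_add]
    calc _ ≤ ∫⁻ _, ENNReal.ofReal D ∂((β univ)⁻¹ • β.prod β') :=
          lintegral_mono fun q => ENNReal.ofReal_le_ofReal (hD _ _)
      _ = ENNReal.ofReal D * β univ := by rw [lintegral_const, hcross.measure_univ]
  calc W1 (α + β) (α + β') ≤ ∫ q, dist q.1 q.2 ∂π :=
        W1_le_integral_dist ((isCoupling_map_diag α).add hcross)
    _ = (∫⁻ q, ENNReal.ofReal (dist q.1 q.2) ∂π).toReal :=
        integral_eq_lintegral_of_nonneg_ae (ae_of_all _ fun _ => dist_nonneg)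
          measurable_dist.aestronglyMeasurable
    _ ≤ (ENNReal.ofReal D * β univ).toReal :=
        ENNReal.toReal_mono (ENNReal.mul_ne_top ENNReal.ofReal_ne_top (measure_ne_top _ _)) hcost
    _ = D * (β univ).toReal := by
        rw [ENNReal.toReal_mul, ENNReal.toReal_ofReal Metric.diam_nonneg]

lemma W1_sum_smul_le [BoundedSpace Y] {ι : Type*} [Fintype ι] (ν : ι → Measure Y)
    [∀ k, IsProbabilityMeasure (ν k)] {a b : ι → ℝ} (ha : ∀ k, 0 ≤ a k) (hb : ∀ k, 0 ≤ b k)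
    (hab : ∑ k, a k = ∑ k, b k) :
    W1 (∑ k, ENNReal.ofReal (a k) • ν k) (∑ k, ENNReal.ofReal (b k) • ν k)
      ≤ Metric.diam (univ : Set Y) * ∑ k, |a k - b k| := by
  set c : ι → ℝ := fun k => min (a k) (b k)
  have hc : ∀ k, 0 ≤ c k := fun k => le_min (ha k) (hb k)
  have hsplit : ∀ x : ι → ℝ, (∀ k, c k ≤ x k) → ∑ k, ENNReal.ofReal (x k) • ν k
      = ∑ k, ENNReal.ofReal (c k) • ν k + ∑ k, ENNReal.ofReal (x k - c k) • ν k := by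
    intro x hx
    rw [← Finset.sum_add_distrib]
    refine Finset.sum_congr rfl fun k _ => ?_
    rw [← add_smul, ← ENNReal.ofReal_add (hc k) (sub_nonneg.mpr (hx k)), add_sub_cancel]
  have hmass : ∀ x : ι → ℝ, (∀ k, c k ≤ x k) →
      (∑ k, ENNReal.ofReal (x k - c k) • ν k) univ = ENNReal.ofReal (∑ k, (x k - c k)) := by
    intro x hx
    simp only [Measure.finsetSum_apply, Measure.smul_apply, measure_univ, smul_eq_mul, mul_one]
    exact (ENNReal.ofReal_sum_of_nonneg fun k _ => sub_nonneg.mpr (hx k)).symm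
  have hca : ∀ k, c k ≤ a k := fun k => min_le_left _ _
  have hcb : ∀ k, c k ≤ b k := fun k => min_le_right _ _
  have : IsFiniteMeasure (∑ k, ENNReal.ofReal (a k - c k) • ν k) :=
    ⟨by rw [hmass a hca]; exact ENNReal.ofReal_lt_top⟩
  have : IsFiniteMeasure (∑ k, ENNReal.ofReal (b k - c k) • ν k) :=
    ⟨by rw [hmass b hcb]; exact ENNReal.ofReal_lt_top⟩
  have hsum : ∑ k, (a k - c k) = ∑ k, (b k - c k) := by
    simp only [Finset.sum_sub_distrib, hab]
  rw [hsplit a hca, hsplit b hcb]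
  refine (W1_add_le _ _ _ (by rw [hmass a hca, hmass b hcb, hsum])).trans ?_
  rw [hmass a hca, ENNReal.toReal_ofReal (Finset.sum_nonneg fun k _ => sub_nonneg.mpr (hca k))]
  gcongr with k
  show a k - min (a k) (b k) ≤ |a k - b k|
  rcases le_total (a k) (b k) with h | h
  · simp [min_eq_left h]
  · rw [min_eq_right h]; exact le_abs_self _

end Coupling

section Mixture

variable {Y ι : Type*} [MeasurableSpace Y] [Fintype ι]

lemma bind_sum_ofReal_smul {W : Type*} [MeasurableSpace W] (μ : Measure W)
    (ν : ι → Measure Y) {g : ι → W → ℝ} (hg : ∀ k, Measurable (g k)) :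
    μ.bind (fun w => ∑ k, ENNReal.ofReal (g k w) • ν k)
      = ∑ k, (∫⁻ w, ENNReal.ofReal (g k w) ∂μ) • ν k := by
  have hf : Measurable fun w => ∑ k, ENNReal.ofReal (g k w) • ν k := by
    refine Measure.measurable_of_measurable_coe _ fun s hs => ?_
    simp only [Measure.finsetSum_apply, Measure.smul_apply, smul_eq_mul]
    exact Finset.measurable_sum _ fun k _ => (hg k).ennreal_ofReal.mul_const _
  ext s hs
  rw [Measure.bind_apply hs hf.aemeasurable]
  simp only [Measure.finsetSum_apply, Measure.smul_apply, smul_eq_mul]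
  rw [lintegral_finsetSum _ fun k _ => (hg k).ennreal_ofReal.mul_const _]
  exact Finset.sum_congr rfl fun k _ => lintegral_mul_const _ (hg k).ennreal_ofReal

noncomputable def softLaw {W : Type*} (γ : ι → W → ℝ) (ν : ι → Measure Y) (w : W) : Measure Y :=
  ∑ k, ENNReal.ofReal (γ k w) • ν k

variable [DecidableEq ι]

lemma sum_ofReal_pi_single_smul (ν : ι → Measure Y) (i : ι) :
    ∑ k, ENNReal.ofReal ((Pi.single i 1 : ι → ℝ) k) • ν k = ν i := by
  rw [Finset.sum_eq_single i (fun k _ hk => by simp [hk]) (by simp)]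
  simp

lemma sum_abs_sub_pi_single {v : ι → ℝ} (hv : ∀ k, 0 ≤ v k) (hv1 : ∑ k, v k = 1) (i : ι) :
    ∑ k, |v k - (Pi.single i 1 : ι → ℝ) k| = 2 * (1 - v i) := by
  have hvi : v i ≤ 1 := hv1 ▸ Finset.single_le_sum (fun k _ => hv k) (Finset.mem_univ i)
  have hrest : ∑ k ∈ Finset.univ.erase i, v k = 1 - v i := by
    rw [← hv1, ← Finset.add_sum_erase _ _ (Finset.mem_univ i), add_sub_cancel_left]
  rw [← Finset.add_sum_erase _ _ (Finset.mem_univ i), Pi.single_eq_same, abs_sub_comm,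
    abs_of_nonneg (sub_nonneg.mpr hvi), Finset.sum_congr rfl fun k hk => by
      rw [Pi.single_eq_of_ne (Finset.ne_of_mem_erase hk), sub_zero, abs_of_nonneg (hv k)],
    hrest]
  ring

end Mixture

section Partition

variable {W ι : Type*} {C : ι → Set W} {c : W → ι}

lemma indicator_apply_eq_pi_single [DecidableEq ι] {M : Type*} [Zero M] {w : W}
    (hw : ∀ k, w ∈ C k ↔ c w = k) (f : W → M) (k : ι) :
    (C k).indicator f w = (Pi.single (c w) (f w) : ι → M) k := by
  by_cases h : c w = k
  · subst h
    rw [Set.indicator_of_mem ((hw _).mpr rfl), Pi.single_eq_same]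
  · rw [Set.indicator_of_notMem (mt (hw k).mp h), Pi.single_eq_of_ne (Ne.symm h)]

lemma sum_indicator_apply [Fintype ι] {M : Type*} [AddCommMonoid M] {w : W}
    (hw : ∀ k, w ∈ C k ↔ c w = k) (f : ι → W → M) :
    ∑ k, (C k).indicator (f k) w = f (c w) w := by
  rw [Finset.sum_eq_single (c w) (fun k _ hk => Set.indicator_of_notMem
      (fun hwk => hk ((hw k).mp hwk).symm) _) (by simp),
    Set.indicator_of_mem ((hw _).mpr rfl)]

noncomputable def gateError [Fintype ι] (C : ι → Set W) (γ : ι → W → ℝ) (w : W) : ℝ :=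
  ∑ k, |γ k w - (C k).indicator (fun _ => 1) w|

lemma gateError_eq [Fintype ι] [DecidableEq ι] {γ : ι → W → ℝ} {w : W}
    (hw : ∀ k, w ∈ C k ↔ c w = k) (hγ0 : ∀ k w, 0 ≤ γ k w) (hγsum : ∀ w, ∑ k, γ k w = 1) :
    gateError C γ w = 2 * (1 - γ (c w) w) := by
  simp only [gateError, indicator_apply_eq_pi_single hw]
  exact sum_abs_sub_pi_single (fun k => hγ0 k w) (hγsum w) (c w)

end Partition

section SoftGate

variable {W ι Y : Type*} [MeasurableSpace W] [MeasurableSpace Y]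

noncomputable def cellAverage [Fintype ι] (Q : Measure W) (C : ι → Set W) (γ : ι → W → ℝ)
    (ν : ι → Measure Y) (k : ι) : Measure Y :=
  (Q (C k))⁻¹ • (Q.restrict (C k)).bind (softLaw γ ν)

noncomputable def cellGate (Q : Measure W) (C : ι → Set W) (γ : ι → W → ℝ) (k k' : ι) : ℝ :=
  (Q.real (C k))⁻¹ * ∫ w in C k, γ k' w ∂Q

structure IsGating [Fintype ι] (γ : ι → W → ℝ) : Prop where
  measurable : ∀ k, Measurable (γ k)
  nonneg : ∀ k w, 0 ≤ γ k w
  sum_eq_one : ∀ w, ∑ k, γ k w = 1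

variable {Q : Measure W} {C : ι → Set W} {γ : ι → W → ℝ}

lemma IsGating.integrable [Fintype ι] (hγ : IsGating γ) (μ : Measure W) [IsFiniteMeasure μ]
    (k : ι) : Integrable (γ k) μ :=
  (integrable_const 1).mono' (hγ.measurable k).aestronglyMeasurable <| ae_of_all _ fun w => by
    rw [Real.norm_eq_abs, abs_of_nonneg (hγ.nonneg k w), ← hγ.sum_eq_one w]
    exact Finset.single_le_sum (fun k _ => hγ.nonneg k w) (Finset.mem_univ k)

lemma integrable_gateError [Fintype ι] [IsFiniteMeasure Q] (hC : ∀ k, MeasurableSet (C k))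
    (hγ : IsGating γ) : Integrable (gateError C γ) Q :=
  integrable_finsetSum _ fun k _ =>
    ((hγ.integrable Q k).sub ((integrable_const 1).indicator (hC k))).abs

lemma cellGate_nonneg (hγ0 : ∀ k w, 0 ≤ γ k w) (k k' : ι) : 0 ≤ cellGate Q C γ k k' :=
  mul_nonneg (inv_nonneg.mpr measureReal_nonneg) (integral_nonneg (hγ0 k'))

lemma sum_cellGate [Fintype ι] [IsFiniteMeasure Q] (hγ : IsGating γ) {k : ι}
    (hQC : Q (C k) ≠ 0) : ∑ k', cellGate Q C γ k k' = 1 := by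
  simp only [cellGate]
  rw [← Finset.mul_sum, ← integral_finsetSum _ fun k' _ => hγ.integrable _ k']
  simp only [hγ.sum_eq_one, setIntegral_const, smul_eq_mul, mul_one]
  exact inv_mul_cancel₀ ((measureReal_ne_zero_iff).mpr hQC)

lemma measureReal_mul_cellGate [IsFiniteMeasure Q] {k : ι} (hQC : Q (C k) ≠ 0) (k' : ι) :
    Q.real (C k) * cellGate Q C γ k k' = ∫ w in C k, γ k' w ∂Q :=
  mul_inv_cancel_left₀ ((measureReal_ne_zero_iff).mpr hQC) _

lemma cellAverage_eq [Fintype ι] [IsFiniteMeasure Q] (hγ : IsGating γ) (ν : ι → Measure Y)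
    {k : ι} (hQC : Q (C k) ≠ 0) :
    cellAverage Q C γ ν k = ∑ k', ENNReal.ofReal (cellGate Q C γ k k') • ν k' := by
  have hq : 0 < Q.real (C k) :=
    measureReal_nonneg.lt_of_ne ((measureReal_ne_zero_iff).mpr hQC).symm
  unfold cellAverage softLaw
  rw [bind_sum_ofReal_smul _ _ hγ.measurable, Finset.smul_sum]
  refine Finset.sum_congr rfl fun k' _ => ?_
  rw [smul_smul, ← ofReal_integral_eq_lintegral_ofReal (hγ.integrable _ k')
      (ae_of_all _ (hγ.nonneg k')), cellGate, ENNReal.ofReal_mul (inv_nonneg.mpr hq.le),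
    ENNReal.ofReal_inv_of_pos hq, ofReal_measureReal]

variable {c : W → ι}

lemma integral_eq_sum_setIntegral [Fintype ι] {E : Type*} [NormedAddCommGroup E]
    [NormedSpace ℝ E] (hcell : ∀ᵐ w ∂Q, ∀ k, w ∈ C k ↔ c w = k) (hC : ∀ k, MeasurableSet (C k))
    {f : W → E} (hf : Integrable f Q) :
    ∫ w, f w ∂Q = ∑ k, ∫ w in C k, f w ∂Q := by
  simp_rw [← integral_indicator (hC _)]
  rw [← integral_finsetSum _ fun k _ => hf.indicator (hC k)]
  exact integral_congr_ae (hcell.mono fun w hw => (sum_indicator_apply hw fun _ => f).symm)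

lemma integral_gateError [Fintype ι] [IsFiniteMeasure Q]
    (hcell : ∀ᵐ w ∂Q, ∀ k, w ∈ C k ↔ c w = k) (hC : ∀ k, MeasurableSet (C k))
    (hQC : ∀ k, Q (C k) ≠ 0) (hγ : IsGating γ) :
    ∫ w, gateError C γ w ∂Q = ∑ k, Q.real (C k) * (2 * (1 - cellGate Q C γ k k)) := by
  classical
  rw [integral_eq_sum_setIntegral hcell hC (integrable_gateError hC hγ)]
  refine Finset.sum_congr rfl fun k _ => ?_
  calc ∫ w in C k, gateError C γ w ∂Q = ∫ w in C k, 2 * (1 - γ k w) ∂Q :=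
        setIntegral_congr_ae (hC k) (hcell.mono fun w hw hwk => by
          rw [gateError_eq hw hγ.nonneg hγ.sum_eq_one, (hw k).mp hwk])
    _ = 2 * (Q.real (C k) - ∫ w in C k, γ k w ∂Q) := by
        rw [integral_const_mul, integral_sub (integrable_const 1) (hγ.integrable _ k),
          setIntegral_const, smul_eq_mul, mul_one]
    _ = Q.real (C k) * (2 * (1 - cellGate Q C γ k k)) := by
        rw [← measureReal_mul_cellGate (hQC k)]
        ring

variable [PseudoMetricSpace Y] [OpensMeasurableSpace Y] [SecondCountableTopology Y]
  [BoundedSpace Y]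

lemma W1_cellAverage_le [Fintype ι] [IsFiniteMeasure Q] (hγ : IsGating γ) (ν : ι → Measure Y)
    [∀ k, IsProbabilityMeasure (ν k)] {k : ι} (hQC : Q (C k) ≠ 0) :
    W1 (cellAverage Q C γ ν k) (ν k)
      ≤ Metric.diam (univ : Set Y) * (2 * (1 - cellGate Q C γ k k)) := by
  classical
  have hsum := sum_cellGate hγ hQC
  calc W1 (cellAverage Q C γ ν k) (ν k)
      = W1 (∑ k', ENNReal.ofReal (cellGate Q C γ k k') • ν k')
          (∑ k', ENNReal.ofReal ((Pi.single k 1 : ι → ℝ) k') • ν k') := by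
        rw [cellAverage_eq hγ ν hQC, sum_ofReal_pi_single_smul]
    _ ≤ Metric.diam (univ : Set Y) *
          ∑ k', |cellGate Q C γ k k' - (Pi.single k 1 : ι → ℝ) k'| :=
        W1_sum_smul_le ν (cellGate_nonneg hγ.nonneg k)
          (fun k' => by rw [Pi.single_apply]; split_ifs <;> norm_num)
          (by rw [hsum, Finset.sum_pi_single', if_pos (Finset.mem_univ k)])
    _ = Metric.diam (univ : Set Y) * (2 * (1 - cellGate Q C γ k k)) := by
        rw [sum_abs_sub_pi_single (cellGate_nonneg hγ.nonneg k) hsum]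

theorem sum_measureReal_mul_W1_cellAverage_le [Fintype ι] [IsFiniteMeasure Q]
    (hcell : ∀ᵐ w ∂Q, ∀ k, w ∈ C k ↔ c w = k) (hC : ∀ k, MeasurableSet (C k))
    (hQC : ∀ k, Q (C k) ≠ 0) (hγ : IsGating γ) (ν : ι → Measure Y)
    [∀ k, IsProbabilityMeasure (ν k)] :
    ∑ k, Q.real (C k) * W1 (cellAverage Q C γ ν k) (ν k)
      ≤ Metric.diam (univ : Set Y) * ∫ w, gateError C γ w ∂Q := by
  rw [integral_gateError hcell hC hQC hγ, Finset.mul_sum]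
  refine Finset.sum_le_sum fun k _ => ?_
  rw [mul_left_comm]
  exact mul_le_mul_of_nonneg_left (W1_cellAverage_le hγ ν (hQC k)) measureReal_nonneg

theorem integral_W1_softLaw_cellAverage_le [Fintype ι] [IsFiniteMeasure Q]
    (hcell : ∀ᵐ w ∂Q, ∀ k, w ∈ C k ↔ c w = k) (hC : ∀ k, MeasurableSet (C k))
    (hQC : ∀ k, Q (C k) ≠ 0) (hγ : IsGating γ) (ν : ι → Measure Y)
    [∀ k, IsProbabilityMeasure (ν k)] :
    ∫ w, W1 (softLaw γ ν w) (cellAverage Q C γ ν (c w)) ∂Q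
      ≤ 2 * Metric.diam (univ : Set Y) * ∫ w, gateError C γ w ∂Q := by
  classical
  set D := Metric.diam (univ : Set Y)
  set penalty : W → ℝ := fun w =>
    ∑ k, (C k).indicator (fun _ => 2 * (1 - cellGate Q C γ k k)) w
  have hpenalty_int : Integrable penalty Q :=
    integrable_finsetSum _ fun k _ => (integrable_const _).indicator (hC k)
  have herror_int : Integrable (gateError C γ) Q := integrable_gateError hC hγ
  have hpenalty : ∫ w, penalty w ∂Q = ∫ w, gateError C γ w ∂Q := by
    rw [integral_finsetSum _ fun k _ => (integrable_const _).indicator (hC k),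
      integral_gateError hcell hC hQC hγ]
    simp only [integral_indicator_const _ (hC _), smul_eq_mul]
  have hpointwise : ∀ᵐ w ∂Q, W1 (softLaw γ ν w) (cellAverage Q C γ ν (c w))
      ≤ D * (gateError C γ w + penalty w) := by
    filter_upwards [hcell] with w hw
    have hsum : ∑ k, cellGate Q C γ (c w) k = 1 := sum_cellGate hγ (hQC (c w))
    have herror : gateError C γ w = ∑ k, |γ k w - (Pi.single (c w) 1 : ι → ℝ) k| := by
      simp only [gateError, indicator_apply_eq_pi_single hw]
    have hpenalty_w : penalty w
        = ∑ k, |(Pi.single (c w) 1 : ι → ℝ) k - cellGate Q C γ (c w) k| := by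
      simp only [penalty, sum_indicator_apply hw, abs_sub_comm _ (cellGate _ _ _ _ _),
        sum_abs_sub_pi_single (cellGate_nonneg hγ.nonneg _) hsum]
    rw [cellAverage_eq hγ ν (hQC (c w)), herror, hpenalty_w, ← Finset.sum_add_distrib]
    refine (W1_sum_smul_le ν (fun k => hγ.nonneg k w) (cellGate_nonneg hγ.nonneg _)
      (by rw [hγ.sum_eq_one, hsum])).trans (mul_le_mul_of_nonneg_left ?_ Metric.diam_nonneg)
    exact Finset.sum_le_sum fun k _ => abs_sub_le _ _ _
  calc ∫ w, W1 (softLaw γ ν w) (cellAverage Q C γ ν (c w)) ∂Q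
      ≤ ∫ w, D * (gateError C γ w + penalty w) ∂Q :=
        integral_mono_of_nonneg (ae_of_all _ fun _ => W1_nonneg _ _)
          ((herror_int.add hpenalty_int).const_mul D) hpointwise
    _ = 2 * D * ∫ w, gateError C γ w ∂Q := by
        rw [integral_const_mul, integral_add herror_int hpenalty_int, hpenalty]
        ring

end SoftGate

section Dyadic

lemma measurableSet_dyI (m k : ℕ) : MeasurableSet (dyI m k) := by
  unfold dyI
  split_ifs
  exacts [measurableSet_Icc, measurableSet_Ico]

lemma measurableSet_dyCell {d : ℕ} (m : Fin d → ℕ) (k : ∀ j, Fin (2 ^ m j)) :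
    MeasurableSet (dyCell m k) := by
  simp only [dyCell, ofPred_forall]
  exact .iInter fun j => measurable_pi_apply j (measurableSet_dyI _ _)

lemma mem_dyI_min_floor {m : ℕ} {x : ℝ} (hx : x ∈ Icc (0 : ℝ) 1) :
    x ∈ dyI m (min ⌊x * 2 ^ m⌋₊ (2 ^ m - 1)) := by
  have hN : (0 : ℝ) < 2 ^ m := by positivity
  have hxN : 0 ≤ x * 2 ^ m := mul_nonneg hx.1 hN.le
  have hpow : 0 < 2 ^ m := Nat.two_pow_pos m
  rcases lt_or_ge ⌊x * 2 ^ m⌋₊ (2 ^ m - 1) with h | h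
  · rw [min_eq_left h.le, dyI, if_neg (by omega), mem_Ico, div_le_iff₀ hN, lt_div_iff₀ hN]
    exact ⟨Nat.floor_le hxN, Nat.lt_floor_add_one _⟩
  · rw [min_eq_right h, dyI, if_pos (by omega), mem_Icc, div_le_iff₀ hN]
    exact ⟨(Nat.cast_le.mpr h).trans (Nat.floor_le hxN), hx.2⟩

lemma min_floor_eq_of_mem_dyI {m k : ℕ} (hk : k < 2 ^ m) {x : ℝ} (hx : x ∈ dyI m k) :
    min ⌊x * 2 ^ m⌋₊ (2 ^ m - 1) = k := by
  have hN : (0 : ℝ) < 2 ^ m := by positivity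
  unfold dyI at hx
  split_ifs at hx with htop
  · have : k ≤ ⌊x * 2 ^ m⌋₊ := Nat.le_floor ((div_le_iff₀ hN).mp hx.1)
    omega
  · have hxN : 0 ≤ x * 2 ^ m :=
      mul_nonneg ((by positivity : (0 : ℝ) ≤ k / 2 ^ m).trans hx.1) hN.le
    have : ⌊x * 2 ^ m⌋₊ = k :=
      (Nat.floor_eq_iff hxN).mpr ⟨(div_le_iff₀ hN).mp hx.1, (lt_div_iff₀ hN).mp hx.2⟩
    omega

lemma mem_dyCell_iff_cellIndexOf_eq {d : ℕ} {m : Fin d → ℕ} {w : Fin d → ℝ}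
    (hw : ∀ j, w j ∈ Icc (0 : ℝ) 1) (k : ∀ j, Fin (2 ^ m j)) :
    w ∈ dyCell m k ↔ cellIndexOf m w = k := by
  constructor
  · intro h
    funext j
    exact Fin.ext (min_floor_eq_of_mem_dyI (k j).isLt (h j))
  · rintro rfl j
    exact mem_dyI_min_floor (hw j)

end Dyadic

theorem stmt13_general (d : ℕ)
    {p : ℕ} (K : Set (EuclideanSpace ℝ (Fin p))) (hK : IsCompact K)
    (m : Fin d → ℕ)
    (Qρ : Measure (Fin d → ℝ)) [IsProbabilityMeasure Qρ]
    (hcube : Qρ {w | ∀ j, w j ∈ Set.Icc (0 : ℝ) 1} = 1)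
    (hpos : ∀ k : (∀ j, Fin (2 ^ m j)), 0 < Qρ (dyCell m k))
    (γ : (∀ j, Fin (2 ^ m j)) → (Fin d → ℝ) → ℝ)
    (hγmeas : ∀ k, Measurable (γ k))
    (hγ01 : ∀ k w, γ k w ∈ Set.Icc (0 : ℝ) 1)
    (hγsum : ∀ w, ∑ k, γ k w = 1)
    (ν : (∀ j, Fin (2 ^ m j)) → Measure ↥K)
    [∀ k, IsProbabilityMeasure (ν k)] :
    -- soft law, its cell averages, integrated gate error
    (∑ k, (Qρ (dyCell m k)).toReal *
        W1 ((Qρ (dyCell m k))⁻¹ •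
              (Qρ.restrict (dyCell m k)).bind
                (fun w => ∑ k', ENNReal.ofReal (γ k' w) • ν k'))
          (ν k)
      ≤ Metric.diam (Set.univ : Set ↥K) *
          ∫ w, ∑ k, |γ k w - Set.indicator (dyCell m k) (fun _ => (1 : ℝ)) w| ∂Qρ) ∧
    (∫ w, W1 (∑ k', ENNReal.ofReal (γ k' w) • ν k')
        ((Qρ (dyCell m (cellIndexOf m w)))⁻¹ •
          (Qρ.restrict (dyCell m (cellIndexOf m w))).bind
            (fun w' => ∑ k', ENNReal.ofReal (γ k' w') • ν k')) ∂Qρ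
      ≤ 2 * Metric.diam (Set.univ : Set ↥K) *
          ∫ w, ∑ k, |γ k w - Set.indicator (dyCell m k) (fun _ => (1 : ℝ)) w| ∂Qρ) := by
  have : CompactSpace K := isCompact_iff_compactSpace.mp hK
  have hcube_ae : ∀ᵐ w ∂Qρ, ∀ j, w j ∈ Icc (0 : ℝ) 1 :=
    (ae_iff_measure_eq (by measurability)).mpr (by rw [hcube, measure_univ])
  have hcell : ∀ᵐ w ∂Qρ, ∀ k, w ∈ dyCell m k ↔ cellIndexOf m w = k :=
    hcube_ae.mono fun w hw => mem_dyCell_iff_cellIndexOf_eq hw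
  have hQC : ∀ k, Qρ (dyCell m k) ≠ 0 := fun k => (hpos k).ne'
  have hγ : IsGating γ := ⟨hγmeas, fun k w => (hγ01 k w).1, hγsum⟩
  exact ⟨sum_measureReal_mul_W1_cellAverage_le hcell (measurableSet_dyCell m) hQC hγ ν,
    integral_W1_softLaw_cellAverage_le hcell (measurableSet_dyCell m) hQC hγ ν⟩

theorem stmt13 (d : ℕ) (hd : 0 < d)
    {p : ℕ} (K : Set (EuclideanSpace ℝ (Fin p))) (hK : IsCompact K)
    (m : Fin d → ℕ)
    (Qρ : Measure (Fin d → ℝ)) [IsProbabilityMeasure Qρ]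
    (hcube : Qρ {w | ∀ j, w j ∈ Set.Icc (0 : ℝ) 1} = 1)
    (hpos : ∀ k : (∀ j, Fin (2 ^ m j)), 0 < Qρ (dyCell m k))
    (γ : (∀ j, Fin (2 ^ m j)) → (Fin d → ℝ) → ℝ)
    (hγmeas : ∀ k, Measurable (γ k))
    (hγ01 : ∀ k w, γ k w ∈ Set.Icc (0 : ℝ) 1)
    (hγsum : ∀ w, ∑ k, γ k w = 1)
    (ν : (∀ j, Fin (2 ^ m j)) → Measure ↥K)
    [∀ k, IsProbabilityMeasure (ν k)] :
    -- soft law, its cell averages, integrated gate error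
    (∑ k, (Qρ (dyCell m k)).toReal *
        W1 ((Qρ (dyCell m k))⁻¹ •
              (Qρ.restrict (dyCell m k)).bind
                (fun w => ∑ k', ENNReal.ofReal (γ k' w) • ν k'))
          (ν k)
      ≤ Metric.diam (Set.univ : Set ↥K) *
          ∫ w, ∑ k, |γ k w - Set.indicator (dyCell m k) (fun _ => (1 : ℝ)) w| ∂Qρ) ∧
    (∫ w, W1 (∑ k', ENNReal.ofReal (γ k' w) • ν k')
        ((Qρ (dyCell m (cellIndexOf m w)))⁻¹ •
          (Qρ.restrict (dyCell m (cellIndexOf m w))).bind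
            (fun w' => ∑ k', ENNReal.ofReal (γ k' w') • ν k')) ∂Qρ
      ≤ 2 * Metric.diam (Set.univ : Set ↥K) *
          ∫ w, ∑ k, |γ k w - Set.indicator (dyCell m k) (fun _ => (1 : ℝ)) w| ∂Qρ) :=
  stmt13_general d K hK m Qρ hcube hpos γ hγmeas hγ01 hγsum ν
end
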